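/- arXiv:math/9705229 — 6 statements merged into one kernel-verified Lean document; each statement's English description precedes it below -/
import Mathlib

section
/- Let P = F_2[v, w] be the polynomial ring in two variables over F_2, and let M be the free P-module with basis γ_2, β_2, γ_3, β_3, α_5. Let T be the P-linear automorphism of M with T(γ_2) = β_2, T(β_2) = γ_2 + β_2, T(γ_3) = γ_3, T(β_3) = β_3, T(α_5) = α_5, and let u be the additive automorphism of M that is semilinear over the F_2-algebra automorphism of P exchanging v and w, with u(γ_2) = β_2, u(β_2) = γ_2, u(γ_3) = β_3, u(β_3) = γ_3, u(α_5) = α_5. Then the set of elements of M fixed by both T and u is a free module over the subring F_2[v + w, vw] of P with basis {γ_3 + β_3, α_5, vγ_3 + wβ_3}. -/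
open MvPolynomial

/-- `P = F₂[v, w]`, with `v = X 0`, `w = X 1`. -/
noncomputable abbrev Ppoly := MvPolynomial (Fin 2) (ZMod 2)

/-- The free `P`-module with basis `γ₂, β₂, γ₃, β₃, α₅` (in that order). -/
abbrev Mmod := Fin 5 → Ppoly

/-- The `P`-linear automorphism `T` with `T(γ₂) = β₂`, `T(β₂) = γ₂ + β₂`,
fixing `γ₃, β₃, α₅` (written in coordinates w.r.t. the basis). -/
noncomputable def Tmap (c : Mmod) : Mmod := ![c 1, c 0 + c 1, c 2, c 3, c 4]

/-- The `F₂`-algebra automorphism of `P` exchanging `v` and `w`. -/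
noncomputable def swapVW : Ppoly →ₐ[ZMod 2] Ppoly := rename (Equiv.swap 0 1)

/-- The additive automorphism `u`, semilinear over `swapVW`, with `u(γ₂) = β₂`,
`u(β₂) = γ₂`, `u(γ₃) = β₃`, `u(β₃) = γ₃`, `u(α₅) = α₅`. -/
noncomputable def umap (c : Mmod) : Mmod :=
  ![swapVW (c 1), swapVW (c 0), swapVW (c 3), swapVW (c 2), swapVW (c 4)]

noncomputable abbrev Rsub : Subalgebra (ZMod 2) Ppoly :=
  Algebra.adjoin (ZMod 2) ({X 0 + X 1, X 0 * X 1} : Set Ppoly)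

lemma swap_X0 : swapVW (X 0) = X 1 := by simp [swapVW]
lemma swap_X1 : swapVW (X 1) = X 0 := by simp [swapVW]

lemma swap_fix {p : Ppoly} (hp : p ∈ Rsub) : swapVW p = p := by
  have hle : Rsub ≤ AlgHom.equalizer swapVW (AlgHom.id (ZMod 2) Ppoly) := by
    apply Algebra.adjoin_le
    intro x hx
    simp only [Set.mem_insert_iff, Set.mem_singleton_iff] at hx
    rcases hx with rfl | rfl <;>
      simp [AlgHom.mem_equalizer, swap_X0, swap_X1, add_comm, mul_comm]
  exact hle hp

lemma X01_ne : (X 0 - X 1 : Ppoly) ≠ 0 := by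
  intro h
  have := congrArg (eval ![(1:ZMod 2), 0]) h
  simp at this

lemma two_eq_zero : (2 : Ppoly) = 0 := by
  have : ((2:ℕ) : Ppoly) = 0 := CharP.cast_eq_zero Ppoly 2
  exact_mod_cast this

lemma uniq {a c : Ppoly} (ha : a ∈ Rsub) (hc : c ∈ Rsub)
    (h : a + c * X 0 = 0) : a = 0 ∧ c = 0 := by
  have h2 : a + c * X 1 = 0 := by
    have := congrArg swapVW h
    simpa [map_add, map_mul, swap_fix ha, swap_fix hc, swap_X0] using this
  have hc0 : c * (X 0 - X 1) = 0 := by linear_combination h - h2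
  rcases mul_eq_zero.mp hc0 with h' | h'
  · rw [h'] at h
    simp at h
    exact ⟨h, h'⟩
  · exact absurd h' X01_ne

lemma exists_decomp (p : Ppoly) :
    ∃ a c : Ppoly, a ∈ Rsub ∧ c ∈ Rsub ∧ p = a + c * X 0 := by
  induction p using MvPolynomial.induction_on with
  | C r =>
      refine ⟨C r, 0, ?_, zero_mem _, by ring⟩
      simpa [MvPolynomial.algebraMap_eq] using Rsub.algebraMap_mem r
  | add p q hp hq =>
      obtain ⟨a1, c1, ha1, hc1, rfl⟩ := hp
      obtain ⟨a2, c2, ha2, hc2, rfl⟩ := hq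
      exact ⟨a1 + a2, c1 + c2, add_mem ha1 ha2, add_mem hc1 hc2, by ring⟩
  | mul_X p i hp =>
      obtain ⟨a, c, ha, hc, rfl⟩ := hp
      have he1 : (X 0 + X 1 : Ppoly) ∈ Rsub := Algebra.subset_adjoin (by simp)
      have he2 : (X 0 * X 1 : Ppoly) ∈ Rsub := Algebra.subset_adjoin (by simp)
      have hi : i = 0 ∨ i = 1 := by omega
      rcases hi with rfl | rfl
      · refine ⟨c * (X 0 * X 1), a + c * (X 0 + X 1),
          mul_mem hc he2, add_mem ha (mul_mem hc he1), ?_⟩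
        linear_combination (-(c * X 0 * X 1)) * two_eq_zero
      · refine ⟨a * (X 0 + X 1) + c * (X 0 * X 1), a,
          add_mem (mul_mem ha he1) (mul_mem hc he2), ha, ?_⟩
        linear_combination (-(a * X 0)) * two_eq_zero

lemma fix_iff_mem {p : Ppoly} : swapVW p = p ↔ p ∈ Rsub := by
  constructor
  · intro h
    obtain ⟨a, c, ha, hc, rfl⟩ := exists_decomp p
    rw [map_add, map_mul, swap_fix ha, swap_fix hc, swap_X0] at h
    have hc0 : c * (X 0 - X 1) = 0 := by linear_combination -h
    rcases mul_eq_zero.mp hc0 with h' | h'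
    · rw [h']; simpa using ha
    · exact absurd h' X01_ne
  · exact swap_fix


/-- The elements of `M` fixed by both `T` and `u` (the `S₃`-invariants) form a
free module over `F₂[v + w, vw] ⊆ P` with basis `{γ₃ + β₃, α₅, vγ₃ + wβ₃}`. -/
theorem S3_invariants_free_module
    (v w : Ppoly) (hv : v = X 0) (hw : w = X 1)
    (b : Fin 3 → Mmod)
    (hb0 : b 0 = ![0, 0, 1, 1, 0])
    (hb1 : b 1 = ![0, 0, 0, 0, 1])
    (hb2 : b 2 = ![0, 0, v, w, 0]) :
    (∀ m : Mmod,
      (Tmap m = m ∧ umap m = m) ↔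
        ∃ c : Fin 3 → ↥(Algebra.adjoin (ZMod 2) ({v + w, v * w} : Set Ppoly)),
          m = ∑ i : Fin 3, (c i : Ppoly) • b i) ∧
    (∀ c : Fin 3 → ↥(Algebra.adjoin (ZMod 2) ({v + w, v * w} : Set Ppoly)),
      ∑ i : Fin 3, (c i : Ppoly) • b i = 0 → ∀ i, c i = 0) := by
  subst hv hw
  constructor
  · intro m
    constructor
    · rintro ⟨hT, hu⟩
      have h0 : m 0 = 0 := by
        have := congrFun hT 1
        simp [Tmap] at this
        linear_combination this
      have h1 : m 1 = 0 := by
        have := congrFun hT 0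
        simp [Tmap] at this
        rw [this, h0]
      have hu3 : swapVW (m 2) = m 3 := by simpa [umap] using congrFun hu 3
      have hu4 : swapVW (m 4) = m 4 := by simpa [umap] using congrFun hu 4
      obtain ⟨a, c, ha, hc, hm2⟩ := exists_decomp (m 2)
      have hm3 : m 3 = a + c * X 1 := by
        rw [← hu3, hm2, map_add, map_mul, swap_fix ha, swap_fix hc, swap_X0]
      refine ⟨![⟨a, ha⟩, ⟨m 4, fix_iff_mem.mp hu4⟩, ⟨c, hc⟩], ?_⟩
      funext j
      fin_cases j <;>
        simp [Fin.sum_univ_three, hb0, hb1, hb2, h0, h1, hm2, hm3]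
    · rintro ⟨c, rfl⟩
      constructor
      · funext j
        fin_cases j <;>
          simp [Tmap, Fin.sum_univ_three, hb0, hb1, hb2]
      · funext j
        fin_cases j <;>
          simp [umap, Fin.sum_univ_three, hb0, hb1, hb2, map_add, map_mul,
            swap_fix (c 0).2, swap_fix (c 1).2, swap_fix (c 2).2,
            swap_X0, swap_X1]
  · intro c h
    have h4 : (c 1 : Ppoly) = 0 := by
      have := congrFun h 4
      simpa [Fin.sum_univ_three, hb0, hb1, hb2] using this
    have h2 : (c 0 : Ppoly) + (c 2 : Ppoly) * X 0 = 0 := by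
      have := congrFun h 2
      simpa [Fin.sum_univ_three, hb0, hb1, hb2] using this
    obtain ⟨h02, h22⟩ := uniq (c 0).2 (c 2).2 h2
    intro i
    fin_cases i
    · exact Subtype.ext h02
    · exact Subtype.ext h4
    · exact Subtype.ext h22
end

section
/- Let F_2[d_2, d_3, d_4] be the polynomial ring in three (algebraically independent) variables d_2, d_3, d_4 over F_2, and set d_6 = d_2 d_4 + d_2^3 + d_3^2 and d_7 = d_3 d_4 + d_2^2 d_3. Then the intersection of the F_2[d_3, d_2^2, d_4^2]-submodule of F_2[d_2, d_3, d_4] generated by {1, d_2 d_3, d_3 d_4, d_2 d_3 d_4} with the subalgebra F_2[d_4, d_6, d_7] equals the F_2[d_4^2, d_6^2, d_7]-submodule generated by {1, d_4 d_7, d_6 d_7, d_4 d_6 d_7}; equivalently, this intersection equals F_2[d_4^2, d_6^2] ⊕ d_7·F_2[d_4, d_6, d_7] (internal direct sum of F_2-submodules of F_2[d_2, d_3, d_4]). -/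
/-!
In `S = F₂[d₂, d₃, d₄]` put `R₁ = F₂[d₃, d₂², d₄²]`. Since `S` is spanned over `R₁` by
`1, d₂, d₄, d₂d₄`, the module `M = R₁⟨1, d₂d₃, d₃d₄, d₂d₃d₄⟩` is `R₁ + d₃S`; hence the partial
derivatives in `d₂` and `d₄` of an element of `M` vanish modulo `d₃`.

Every element of `A = F₂[d₄, d₆, d₇]` is `Q(d₄, d₆) + d₇h` with `h ∈ A`, and `d₇ = d₃(d₄ + d₂²)`.
If it lies in `M`, so does `Q(d₄, d₆)`, and the chain rule modulo `d₃` (where `d₆` becomes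
`d₆' = d₂d₄ + d₂³`) forces `∂Q/∂x = ∂Q/∂y = 0` as soon as `d₄, d₆'` are algebraically independent.
They are, because `(d₂, d₄) ↦ (d₄, d₆')` is onto over `F̄₂` (a cubic always has a root). In
characteristic `2` this makes `Q` a polynomial in squares, so `Q(d₄, d₆) ∈ F₂[d₄², d₆²]`. Hence
`M ∩ A ⊆ F₂[d₄², d₆²] + d₇A ⊆ N ⊆ M ∩ A`. The sum is direct since reduction modulo `d₃` kills `d₇`
but is injective on `F₂[d₄², d₆²]`.
-/

open MvPolynomial Algebra

section SpanAdjoin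
variable {K A : Type*} [CommSemiring K] [CommSemiring A] [Algebra K A] {T : Subalgebra K A}

theorem mul_mem_span {s : Set A} {r g : A} (hr : r ∈ T) (hg : g ∈ s) :
    r * g ∈ Submodule.span T s := by
  simpa [Subalgebra.smul_def] using Submodule.smul_mem _ ⟨r, hr⟩ (Submodule.subset_span (R := T) hg)

theorem mem_span_of_one_mem {s : Set A} {r : A} (hr : r ∈ T) (h1 : 1 ∈ s) :
    r ∈ Submodule.span T s := by
  simpa using mul_mem_span hr h1

theorem mul_mem_span_of_forall_mul_mem {x : A} {s t : Set A}
    (h : ∀ g ∈ s, x * g ∈ Submodule.span T t) {p : A} (hp : p ∈ Submodule.span T s) :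
    x * p ∈ Submodule.span T t :=
  (Submodule.map_span_le (LinearMap.mulLeft T x) s _).2 h ⟨p, hp, rfl⟩

theorem adjoin_subset_span {s t : Set A} (h1 : (1 : A) ∈ t)
    (h : ∀ x ∈ s, ∀ g ∈ t, x * g ∈ Submodule.span T t) :
    (adjoin K s : Set A) ⊆ Submodule.span T t := by
  intro y hy
  suffices ∀ p ∈ Submodule.span T t, y * p ∈ Submodule.span T t by
    simpa using this 1 (Submodule.subset_span h1)
  induction hy using adjoin_induction with
  | mem x hx => exact fun p hp => mul_mem_span_of_forall_mul_mem (h x hx) hp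
  | algebraMap k =>
    intro p hp
    rw [← Algebra.smul_def]
    exact Submodule.smul_of_tower_mem _ k hp
  | add x y _ _ hx hy => exact fun p hp => by rw [add_mul]; exact add_mem (hx p hp) (hy p hp)
  | mul x y _ _ hx hy => exact fun p hp => by rw [mul_assoc]; exact hx _ (hy p hp)

theorem span_subset_of_le {U : Subalgebra K A} (hTU : T ≤ U) {s : Set A} (hs : s ⊆ U) :
    (Submodule.span T s : Set A) ⊆ U := by
  intro p hp
  induction hp using Submodule.span_induction with
  | mem x hx => exact hs hx
  | zero => exact zero_mem U
  | add x y _ _ hx hy => exact add_mem hx hy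
  | smul r x _ hx => exact mul_mem (hTU r.2) hx

theorem exists_eq_add_mul_of_mem_adjoin_insert {x y : A} {s : Set A}
    (hy : y ∈ adjoin K (insert x s)) :
    ∃ u ∈ adjoin K s, ∃ h ∈ adjoin K (insert x s), y = u + x * h := by
  have hx : x ∈ adjoin K (insert x s) := subset_adjoin (Set.mem_insert x s)
  have hle : adjoin K s ≤ adjoin K (insert x s) := adjoin_mono (Set.subset_insert x s)
  induction hy using adjoin_induction with
  | mem z hz =>
    rcases hz with rfl | hz
    · exact ⟨0, zero_mem _, 1, one_mem _, by ring⟩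
    · exact ⟨z, subset_adjoin hz, 0, zero_mem _, by ring⟩
  | algebraMap k => exact ⟨algebraMap K A k, Subalgebra.algebraMap_mem _ k, 0, zero_mem _, by ring⟩
  | add y z _ _ hy hz =>
    obtain ⟨u, hu, h, hh, rfl⟩ := hy
    obtain ⟨u', hu', h', hh', rfl⟩ := hz
    exact ⟨u + u', add_mem hu hu', h + h', add_mem hh hh', by ring⟩
  | mul y z _ _ hy hz =>
    obtain ⟨u, hu, h, hh, rfl⟩ := hy
    obtain ⟨u', hu', h', hh', rfl⟩ := hz
    exact ⟨u * u', mul_mem hu hu', u * h' + h * u' + x * h * h',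
      add_mem (add_mem (mul_mem (hle hu) hh') (mul_mem hh (hle hu')))
        (mul_mem (mul_mem hx hh) hh'), by ring⟩

theorem mem_sup_map_mulLeft_iff {U V : Subalgebra K A} {x p : A} :
    p ∈ Subalgebra.toSubmodule U ⊔ (Subalgebra.toSubmodule V).map (LinearMap.mulLeft K x) ↔
      ∃ u ∈ U, ∃ h ∈ V, p = u + x * h := by
  simp only [Submodule.mem_sup, Submodule.mem_map, Subalgebra.mem_toSubmodule,
    LinearMap.mulLeft_apply]
  constructor
  · rintro ⟨u, hu, _, ⟨h, hh, rfl⟩, rfl⟩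
    exact ⟨u, hu, h, hh, rfl⟩
  · rintro ⟨u, hu, h, hh, rfl⟩
    exact ⟨u, hu, _, ⟨h, hh, rfl⟩, rfl⟩

end SpanAdjoin

namespace MvPolynomial

variable {R σ ι : Type*} [CommRing R]

theorem pderiv_aeval [Fintype ι] (v : ι → MvPolynomial σ R) (j : σ) (Q : MvPolynomial ι R) :
    pderiv j (aeval v Q) = ∑ i, aeval v (pderiv i Q) * pderiv j (v i) := by
  classical
  induction Q using MvPolynomial.induction_on with
  | C r => simp [← algebraMap_eq]
  | add p q hp hq => simp only [map_add, hp, hq, add_mul, Finset.sum_add_distrib]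
  | mul_X p k hp =>
    simp only [map_mul, aeval_X, pderiv_mul, map_add, hp, pderiv_X, add_mul,
      Finset.sum_add_distrib, Finset.sum_mul, Pi.single_apply]
    simp [mul_comm, mul_left_comm]

theorem dvd_of_mem_support_of_pderiv_eq_zero [IsDomain R] (p : ℕ) [CharP R p]
    {Q : MvPolynomial σ R} (hQ : ∀ i, pderiv i Q = 0) {m : σ →₀ ℕ} (hm : m ∈ Q.support)
    (i : σ) : p ∣ m i := by
  obtain h0 | hpos := Nat.eq_zero_or_pos (m i)
  · simp [h0]
  have hle : Finsupp.single i 1 ≤ m := Finsupp.single_le_iff.2 hpos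
  have hcoeff := coeff_pderiv (i := i) Q (m - Finsupp.single i 1)
  rw [hQ, tsub_add_cancel_of_le hle, coeff_zero, Finsupp.tsub_apply, Finsupp.single_eq_same,
    ← Nat.cast_one (R := R), ← Nat.cast_add, Nat.sub_add_cancel hpos] at hcoeff
  exact (CharP.cast_eq_zero_iff R p _).1
    ((mul_eq_zero.1 hcoeff.symm).resolve_left (mem_support_iff.1 hm))

theorem mem_range_expand_of_pderiv_eq_zero [IsDomain R] (p : ℕ) [CharP R p]
    {Q : MvPolynomial σ R} (hQ : ∀ i, pderiv i Q = 0) : Q ∈ (expand p).range := by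
  rw [Q.as_sum]
  refine Subalgebra.sum_mem _ fun m hm => ?_
  have hm : p • Finsupp.mapRange (· / p) (Nat.zero_div p) m = m := by
    ext i; simp [Nat.mul_div_cancel' (dvd_of_mem_support_of_pderiv_eq_zero p hQ hm i)]
  refine ⟨monomial (Finsupp.mapRange (· / p) (Nat.zero_div p) m) (coeff m Q), ?_⟩
  simp only [AlgHom.toRingHom_eq_coe, RingHom.coe_coe, expand_monomial, hm]

end MvPolynomial

theorem adjoin_pair_eq_range_aeval {K A : Type*} [CommSemiring K] [CommSemiring A] [Algebra K A]
    (x y : A) : adjoin K {x, y} = (aeval ![x, y] : MvPolynomial (Fin 2) K →ₐ[K] A).range := by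
  rw [← adjoin_range_eq_range_aeval, Matrix.range_cons_cons_empty]

theorem algebraicIndependent_of_forall_exists_aeval_eq {K L ι σ : Type*} [Field K] [Field L]
    [Algebra K L] [Infinite L] {v : ι → MvPolynomial σ K}
    (h : ∀ x : ι → L, ∃ y : σ → L, ∀ i, aeval y (v i) = x i) : AlgebraicIndependent K v := by
  refine algebraicIndependent_iff.2 fun Q hQ => map_injective _ (algebraMap K L).injective ?_
  refine (MvPolynomial.funext fun x => ?_).trans (map_zero _).symm
  obtain ⟨y, hy⟩ := h x
  have : (fun i => aeval y (v i)) = x := funext hy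
  rw [eval_map, ← aeval_def, ← this, ← comp_aeval_apply, hQ]
  simp

namespace DicksonIntersection

noncomputable section

abbrev S := MvPolynomial (Fin 3) (ZMod 2)

def d₂ : S := X 0
def d₃ : S := X 1
def d₄ : S := X 2
def d₆ : S := d₂ * d₄ + d₂ ^ 3 + d₃ ^ 2
def d₇ : S := d₃ * d₄ + d₂ ^ 2 * d₃

def R₁ : Subalgebra (ZMod 2) S := adjoin (ZMod 2) {d₃, d₂ ^ 2, d₄ ^ 2}
def M : Submodule R₁ S := Submodule.span R₁ {1, d₂ * d₃, d₃ * d₄, d₂ * d₃ * d₄}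
def R₂ : Subalgebra (ZMod 2) S := adjoin (ZMod 2) {d₄ ^ 2, d₆ ^ 2, d₇}
def N : Submodule R₂ S := Submodule.span R₂ {1, d₄ * d₇, d₆ * d₇, d₄ * d₆ * d₇}
def A : Subalgebra (ZMod 2) S := adjoin (ZMod 2) {d₄, d₆, d₇}
def B : Subalgebra (ZMod 2) S := adjoin (ZMod 2) {d₄ ^ 2, d₆ ^ 2}

theorem d₃_mem_R₁ : d₃ ∈ R₁ := subset_adjoin (by simp)
theorem d₂_sq_mem_R₁ : d₂ ^ 2 ∈ R₁ := subset_adjoin (by simp)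
theorem d₄_sq_mem_R₁ : d₄ ^ 2 ∈ R₁ := subset_adjoin (by simp)

/-- `M` as a subalgebra, see `coe_M`. -/
def MAlg : Subalgebra (ZMod 2) S where
  carrier := {p | ∃ r ∈ R₁, ∃ s, p = r + d₃ * s}
  mul_mem' := by
    rintro _ _ ⟨r, hr, s, rfl⟩ ⟨r', hr', s', rfl⟩
    exact ⟨r * r', mul_mem hr hr', r * s' + s * r' + d₃ * s * s', by ring⟩
  add_mem' := by
    rintro _ _ ⟨r, hr, s, rfl⟩ ⟨r', hr', s', rfl⟩
    exact ⟨r + r', add_mem hr hr', s + s', by ring⟩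
  algebraMap_mem' k := ⟨algebraMap _ _ k, R₁.algebraMap_mem k, 0, by ring⟩

theorem R₁_le_MAlg : R₁ ≤ MAlg := fun r hr => ⟨r, hr, 0, by ring⟩
theorem d₃_mul_mem_MAlg (s : S) : d₃ * s ∈ MAlg := ⟨0, zero_mem _, s, by ring⟩

theorem mem_span_R₁ (s : S) : s ∈ Submodule.span R₁ {1, d₂, d₄, d₂ * d₄} := by
  refine adjoin_subset_span (K := ZMod 2) (s := Set.range X) (by simp) ?_
    (by rw [adjoin_range_X]; trivial)
  rintro _ ⟨i, rfl⟩ g hg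
  fin_cases i
  · change d₂ * g ∈ _
    rcases hg with rfl | rfl | rfl | rfl
    · exact Submodule.subset_span (by simp)
    · rw [show d₂ * d₂ = d₂ ^ 2 * 1 by ring]; exact mul_mem_span d₂_sq_mem_R₁ (by simp)
    · exact Submodule.subset_span (by simp)
    · rw [show d₂ * (d₂ * d₄) = d₂ ^ 2 * d₄ by ring]; exact mul_mem_span d₂_sq_mem_R₁ (by simp)
  · exact mul_mem_span d₃_mem_R₁ hg
  · change d₄ * g ∈ _
    rcases hg with rfl | rfl | rfl | rfl
    · exact Submodule.subset_span (by simp)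
    · exact Submodule.subset_span (by simp [mul_comm])
    · rw [show d₄ * d₄ = d₄ ^ 2 * 1 by ring]; exact mul_mem_span d₄_sq_mem_R₁ (by simp)
    · rw [show d₄ * (d₂ * d₄) = d₄ ^ 2 * d₂ by ring]; exact mul_mem_span d₄_sq_mem_R₁ (by simp)

theorem d₃_mul_mem_M (s : S) : d₃ * s ∈ M := by
  refine mul_mem_span_of_forall_mul_mem ?_ (mem_span_R₁ s)
  rintro g (rfl | rfl | rfl | rfl)
  · rw [mul_one]; exact mem_span_of_one_mem d₃_mem_R₁ (by simp)
  · exact Submodule.subset_span (by simp [mul_comm])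
  · exact Submodule.subset_span (by simp)
  · exact Submodule.subset_span (by simp [mul_left_comm, mul_assoc])

theorem coe_M : (M : Set S) = MAlg := by
  refine subset_antisymm (span_subset_of_le R₁_le_MAlg ?_) ?_
  · rintro _ (rfl | rfl | rfl | rfl)
    · exact one_mem _
    · rw [mul_comm]; exact d₃_mul_mem_MAlg _
    · exact d₃_mul_mem_MAlg _
    · rw [mul_right_comm, mul_comm]; exact d₃_mul_mem_MAlg _
  · rintro _ ⟨r, hr, s, rfl⟩
    exact add_mem (mem_span_of_one_mem hr (by simp)) (d₃_mul_mem_M s)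

theorem d₆_sq_mem_R₁ : d₆ ^ 2 ∈ R₁ := by
  rw [show d₆ ^ 2 = d₂ ^ 2 * d₄ ^ 2 + (d₂ ^ 2) ^ 3 + d₃ ^ 4 by
    simp only [d₆, CharTwo.add_sq]; ring]
  exact add_mem (add_mem (mul_mem d₂_sq_mem_R₁ d₄_sq_mem_R₁) (pow_mem d₂_sq_mem_R₁ 3))
    (pow_mem d₃_mem_R₁ 4)

theorem d₇_eq_d₃_mul : d₇ = d₃ * (d₄ + d₂ ^ 2) := by rw [d₇]; ring

theorem N_subset_M : (N : Set S) ⊆ M := by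
  rw [coe_M]
  refine span_subset_of_le (adjoin_le ?_) ?_
  · rintro _ (rfl | rfl | rfl)
    · exact R₁_le_MAlg d₄_sq_mem_R₁
    · exact R₁_le_MAlg d₆_sq_mem_R₁
    · rw [d₇_eq_d₃_mul]; exact d₃_mul_mem_MAlg _
  · rintro _ (rfl | rfl | rfl | rfl)
    · exact one_mem _
    all_goals rw [d₇_eq_d₃_mul, mul_left_comm]; exact d₃_mul_mem_MAlg _

theorem d₄_mem_A : d₄ ∈ A := subset_adjoin (by simp)
theorem d₆_mem_A : d₆ ∈ A := subset_adjoin (by simp)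
theorem d₇_mem_A : d₇ ∈ A := subset_adjoin (by simp)

theorem R₂_le_A : R₂ ≤ A := adjoin_le (by
  rintro _ (rfl | rfl | rfl)
  · exact pow_mem d₄_mem_A 2
  · exact pow_mem d₆_mem_A 2
  · exact d₇_mem_A)

theorem N_subset_A : (N : Set S) ⊆ A := by
  refine span_subset_of_le R₂_le_A ?_
  rintro _ (rfl | rfl | rfl | rfl)
  · exact one_mem _
  · exact mul_mem d₄_mem_A d₇_mem_A
  · exact mul_mem d₆_mem_A d₇_mem_A
  · exact mul_mem (mul_mem d₄_mem_A d₆_mem_A) d₇_mem_A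

theorem d₄_sq_mem_R₂ : d₄ ^ 2 ∈ R₂ := subset_adjoin (by simp)
theorem d₆_sq_mem_R₂ : d₆ ^ 2 ∈ R₂ := subset_adjoin (by simp)
theorem d₇_mem_R₂ : d₇ ∈ R₂ := subset_adjoin (by simp)

theorem A_subset_span_R₂ : (A : Set S) ⊆ Submodule.span R₂ {1, d₄, d₆, d₄ * d₆} := by
  refine adjoin_subset_span (by simp) ?_
  rintro x (rfl | rfl | rfl) g hg
  · rcases hg with rfl | rfl | rfl | rfl
    · exact Submodule.subset_span (by simp)
    · rw [show d₄ * d₄ = d₄ ^ 2 * 1 by ring]; exact mul_mem_span d₄_sq_mem_R₂ (by simp)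
    · exact Submodule.subset_span (by simp)
    · rw [show d₄ * (d₄ * d₆) = d₄ ^ 2 * d₆ by ring]; exact mul_mem_span d₄_sq_mem_R₂ (by simp)
  · rcases hg with rfl | rfl | rfl | rfl
    · exact Submodule.subset_span (by simp)
    · exact Submodule.subset_span (by simp [mul_comm])
    · rw [show d₆ * d₆ = d₆ ^ 2 * 1 by ring]; exact mul_mem_span d₆_sq_mem_R₂ (by simp)
    · rw [show d₆ * (d₄ * d₆) = d₆ ^ 2 * d₄ by ring]; exact mul_mem_span d₆_sq_mem_R₂ (by simp)
  · exact mul_mem_span d₇_mem_R₂ hg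

theorem d₇_mul_mem_N {h : S} (hh : h ∈ A) : d₇ * h ∈ N := by
  refine mul_mem_span_of_forall_mul_mem ?_ (A_subset_span_R₂ hh)
  rintro g (rfl | rfl | rfl | rfl)
  · rw [mul_one]; exact mem_span_of_one_mem d₇_mem_R₂ (by simp)
  · exact Submodule.subset_span (by simp [mul_comm])
  · exact Submodule.subset_span (by simp [mul_comm])
  · exact Submodule.subset_span (by simp [mul_comm])

theorem B_le_R₂ : B ≤ R₂ := adjoin_le (by
  rintro _ (rfl | rfl)
  · exact d₄_sq_mem_R₂
  · exact d₆_sq_mem_R₂)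

theorem add_d₇_mul_mem_N {u h : S} (hu : u ∈ B) (hh : h ∈ A) : u + d₇ * h ∈ N :=
  add_mem (mem_span_of_one_mem (B_le_R₂ hu) (by simp)) (d₇_mul_mem_N hh)

def killD₃ : S →ₐ[ZMod 2] S := aeval ![X 0, 0, X 2]

def d₆' : S := d₂ * d₄ + d₂ ^ 3

theorem killD₃_d₂ : killD₃ d₂ = d₂ := by simp [killD₃, d₂]
theorem killD₃_d₃ : killD₃ d₃ = 0 := by simp [killD₃, d₃]
theorem killD₃_d₄ : killD₃ d₄ = d₄ := by simp [killD₃, d₄]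
theorem killD₃_d₆ : killD₃ d₆ = d₆' := by simp [killD₃, d₆, d₆', d₂, d₃, d₄]
theorem killD₃_d₇ : killD₃ d₇ = 0 := by simp [killD₃, d₇, d₂, d₃, d₄]

theorem killD₃_aeval (Q : MvPolynomial (Fin 2) (ZMod 2)) :
    killD₃ (aeval ![d₄, d₆] Q) = aeval ![d₄, d₆'] Q := by
  rw [← AlgHom.comp_apply, comp_aeval]
  congr 2
  ext i
  fin_cases i <;> simp [killD₃_d₄, killD₃_d₆]

theorem pderiv_zero_d₄ : pderiv 0 d₄ = 0 := pderiv_X_of_ne (by decide)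
theorem pderiv_two_d₄ : pderiv 2 d₄ = 1 := pderiv_X_self 2
theorem pderiv_zero_d₆ : pderiv 0 d₆ = d₄ + d₂ ^ 2 := by
  simp [d₆, d₂, d₃, d₄, pderiv_X]
  linear_combination (CharTwo.two_eq_zero : (2 : S) = 0)
theorem pderiv_two_d₆ : pderiv 2 d₆ = d₂ := by simp [d₆, d₂, d₃, d₄, pderiv_X]

theorem killD₃_pderiv_eq_zero {p : S} (hp : p ∈ MAlg) {i : Fin 3} (hi : i ≠ 1) :
    killD₃ (pderiv i p) = 0 := by
  obtain ⟨r, hr, s, rfl⟩ := hp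
  have hd₃ : pderiv i d₃ = 0 := pderiv_X_of_ne hi.symm
  have hdr : pderiv i r = 0 := (pderiv i).eqOn_adjoin (D2 := 0) (by
    rintro _ (rfl | rfl | rfl)
    · exact hd₃
    · simp [CharTwo.two_eq_zero]
    · simp [CharTwo.two_eq_zero]) hr
  simp [hdr, hd₃, killD₃_d₃]

theorem forall_exists_aeval_d₄_d₆'_eq (x : Fin 2 → AlgebraicClosure (ZMod 2)) :
    ∃ y : Fin 3 → AlgebraicClosure (ZMod 2), ∀ i, aeval y (![d₄, d₆'] i) = x i := by
  have hdeg : (Polynomial.X ^ 3 + Polynomial.C (x 0) * Polynomial.X + Polynomial.C (x 1)).degree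
      = 3 := by compute_degree!
  obtain ⟨t, ht⟩ := IsAlgClosed.exists_root _ (by rw [hdeg]; decide)
  refine ⟨![t, 0, x 0], fun i => ?_⟩
  fin_cases i
  · simp [d₄]
  · simp [d₆', d₂, d₄] at ht ⊢
    linear_combination ht - x 1 * (CharTwo.two_eq_zero : (2 : AlgebraicClosure (ZMod 2)) = 0)

theorem algebraicIndependent_d₄_d₆' : AlgebraicIndependent (ZMod 2) ![d₄, d₆'] :=
  algebraicIndependent_of_forall_exists_aeval_eq forall_exists_aeval_d₄_d₆'_eq

theorem aeval_sq_eq_aeval_expand (G : MvPolynomial (Fin 2) (ZMod 2)) :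
    aeval ![d₄ ^ 2, d₆ ^ 2] G = aeval ![d₄, d₆] (expand 2 G) := by
  have hsq : (![d₄, d₆] ^ 2 : Fin 2 → S) = ![d₄ ^ 2, d₆ ^ 2] := by
    funext i; fin_cases i <;> rfl
  rw [aeval_expand, hsq]

theorem mem_B_of_killD₃_pderiv_eq_zero {u : S} (hu : u ∈ adjoin (ZMod 2) {d₄, d₆})
    (h₀ : killD₃ (pderiv 0 u) = 0) (h₂ : killD₃ (pderiv 2 u) = 0) : u ∈ B := by
  rw [adjoin_pair_eq_range_aeval] at hu
  obtain ⟨Q, rfl⟩ := hu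
  simp only [AlgHom.toRingHom_eq_coe, RingHom.coe_coe, pderiv_aeval, Fin.sum_univ_two,
    Matrix.cons_val_zero, Matrix.cons_val_one, pderiv_zero_d₄, pderiv_zero_d₆,
    pderiv_two_d₄, pderiv_two_d₆, map_add, map_mul, map_pow, killD₃_aeval, killD₃_d₂,
    killD₃_d₄, mul_zero, zero_add, mul_one] at h₀ h₂
  have hne : d₄ + d₂ ^ 2 ≠ 0 := fun h => by
    simpa [d₂, d₄] using congrArg (eval ![0, 0, 1]) h
  have hQ₁ : pderiv 1 Q = 0 :=
    algebraicIndependent_d₄_d₆'.eq_zero_of_aeval_eq_zero _ ((mul_eq_zero.1 h₀).resolve_right hne)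
  have hQ₀ : pderiv 0 Q = 0 :=
    algebraicIndependent_d₄_d₆'.eq_zero_of_aeval_eq_zero _ (by simpa [hQ₁] using h₂)
  obtain ⟨G, rfl⟩ := mem_range_expand_of_pderiv_eq_zero 2 (Q := Q) (by
    intro i; fin_cases i
    exacts [hQ₀, hQ₁])
  rw [B, adjoin_pair_eq_range_aeval]
  exact ⟨G, aeval_sq_eq_aeval_expand G⟩

theorem exists_eq_add_d₇_mul {p : S} (hM : p ∈ M) (hA : p ∈ A) :
    ∃ u ∈ B, ∃ h ∈ A, p = u + d₇ * h := by
  have hA' : A = adjoin (ZMod 2) (insert d₇ {d₄, d₆}) := by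
    rw [A, Set.pair_comm d₆ d₇, Set.insert_comm d₄ d₇]
  rw [hA'] at hA ⊢
  obtain ⟨u, hu, h, hh, rfl⟩ := exists_eq_add_mul_of_mem_adjoin_insert hA
  have huM : u ∈ MAlg := by
    have hpM : u + d₇ * h ∈ (MAlg : Set S) := coe_M ▸ hM
    rw [show u = u + d₇ * h - d₃ * ((d₄ + d₂ ^ 2) * h) by rw [d₇_eq_d₃_mul]; ring]
    exact sub_mem hpM (d₃_mul_mem_MAlg _)
  exact ⟨u, mem_B_of_killD₃_pderiv_eq_zero hu (killD₃_pderiv_eq_zero huM (by decide))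
    (killD₃_pderiv_eq_zero huM (by decide)), h, hh, rfl⟩

theorem mem_N_iff {p : S} : p ∈ N ↔ ∃ u ∈ B, ∃ h ∈ A, p = u + d₇ * h :=
  ⟨fun hp => exists_eq_add_d₇_mul (N_subset_M hp) (N_subset_A hp),
    fun ⟨_, hu, _, hh, hp⟩ => hp ▸ add_d₇_mul_mem_N hu hh⟩

theorem coe_M_inter_A : (M : Set S) ∩ A = N :=
  subset_antisymm (fun _ ⟨hM, hA⟩ => mem_N_iff.2 (exists_eq_add_d₇_mul hM hA))
    fun _ hp => ⟨N_subset_M hp, N_subset_A hp⟩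

theorem d₇_mul_eq_zero_of_mem_B {h : S} (hB : d₇ * h ∈ B) : d₇ * h = 0 := by
  rw [B, adjoin_pair_eq_range_aeval] at hB
  obtain ⟨G, hG⟩ := hB
  change aeval ![d₄ ^ 2, d₆ ^ 2] G = d₇ * h at hG
  have hG' : aeval ![d₄, d₆'] (expand 2 G) = 0 := by
    rw [← killD₃_aeval, ← aeval_sq_eq_aeval_expand, hG, map_mul, killD₃_d₇, zero_mul]
  rw [← hG, (expand_eq_zero two_pos).1 (algebraicIndependent_d₄_d₆'.eq_zero_of_aeval_eq_zero _ hG'),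
    map_zero]

end

end DicksonIntersection

/-- In `F₂[d₂, d₃, d₄]` with `d₆ = d₂d₄ + d₂³ + d₃²` and `d₇ = d₃d₄ + d₂²d₃`,
the intersection of the `F₂[d₃, d₂², d₄²]`-submodule generated by
`{1, d₂d₃, d₃d₄, d₂d₃d₄}` with the subalgebra `F₂[d₄, d₆, d₇]` equals the
`F₂[d₄², d₆², d₇]`-submodule generated by `{1, d₄d₇, d₆d₇, d₄d₆d₇}`;
equivalently, it is the internal direct sum `F₂[d₄², d₆²] ⊕ d₇·F₂[d₄, d₆, d₇]`. -/
theorem intersection_with_dickson_algebra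
    (d₂ d₃ d₄ d₆ d₇ : MvPolynomial (Fin 3) (ZMod 2))
    (hd₂ : d₂ = X 0) (hd₃ : d₃ = X 1) (hd₄ : d₄ = X 2)
    (hd₆ : d₆ = d₂ * d₄ + d₂ ^ 3 + d₃ ^ 2) (hd₇ : d₇ = d₃ * d₄ + d₂ ^ 2 * d₃) :
    ((Submodule.span
        ↥(Algebra.adjoin (ZMod 2) ({d₃, d₂ ^ 2, d₄ ^ 2} : Set (MvPolynomial (Fin 3) (ZMod 2))))
        ({1, d₂ * d₃, d₃ * d₄, d₂ * d₃ * d₄} : Set (MvPolynomial (Fin 3) (ZMod 2))) : Set (MvPolynomial (Fin 3) (ZMod 2))) ∩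
      (Algebra.adjoin (ZMod 2) ({d₄, d₆, d₇} : Set (MvPolynomial (Fin 3) (ZMod 2))) : Set (MvPolynomial (Fin 3) (ZMod 2))) =
      (Submodule.span
        ↥(Algebra.adjoin (ZMod 2) ({d₄ ^ 2, d₆ ^ 2, d₇} : Set (MvPolynomial (Fin 3) (ZMod 2))))
        ({1, d₄ * d₇, d₆ * d₇, d₄ * d₆ * d₇} : Set (MvPolynomial (Fin 3) (ZMod 2))) : Set (MvPolynomial (Fin 3) (ZMod 2)))) ∧
    ((Submodule.span
        ↥(Algebra.adjoin (ZMod 2) ({d₄ ^ 2, d₆ ^ 2, d₇} : Set (MvPolynomial (Fin 3) (ZMod 2))))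
        ({1, d₄ * d₇, d₆ * d₇, d₄ * d₆ * d₇} : Set (MvPolynomial (Fin 3) (ZMod 2))) : Set (MvPolynomial (Fin 3) (ZMod 2))) =
      ((Subalgebra.toSubmodule
          (Algebra.adjoin (ZMod 2) ({d₄ ^ 2, d₆ ^ 2} : Set (MvPolynomial (Fin 3) (ZMod 2)))) ⊔
        (Subalgebra.toSubmodule
          (Algebra.adjoin (ZMod 2)
            ({d₄, d₆, d₇} : Set (MvPolynomial (Fin 3) (ZMod 2))))).map
              (LinearMap.mulLeft (ZMod 2) d₇) : Submodule (ZMod 2) (MvPolynomial (Fin 3) (ZMod 2))) : Set (MvPolynomial (Fin 3) (ZMod 2)))) ∧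
    Disjoint
      (Subalgebra.toSubmodule
        (Algebra.adjoin (ZMod 2) ({d₄ ^ 2, d₆ ^ 2} : Set (MvPolynomial (Fin 3) (ZMod 2)))))
      ((Subalgebra.toSubmodule
        (Algebra.adjoin (ZMod 2)
          ({d₄, d₆, d₇} : Set (MvPolynomial (Fin 3) (ZMod 2))))).map
            (LinearMap.mulLeft (ZMod 2) d₇)) := by
  subst hd₂ hd₃ hd₄ hd₆ hd₇
  open DicksonIntersection in
  refine ⟨coe_M_inter_A, Set.ext fun p => mem_N_iff.trans mem_sup_map_mulLeft_iff.symm, ?_⟩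
  rw [Submodule.disjoint_def]
  rintro _ hB ⟨h, -, rfl⟩
  exact d₇_mul_eq_zero_of_mem_B hB
end

section
/- Let F_2[d_2, d_3, d_4] be the polynomial ring in three (algebraically independent) variables d_2, d_3, d_4 over F_2, and set d_6 = d_2 d_4 + d_2^3 + d_3^2. Then the intersection of the F_2[d_3, d_2^2, d_4^2]-submodule of F_2[d_2, d_3, d_4] generated by {1, d_2 d_3, d_3 d_4, d_2 d_3 d_4} with the subalgebra F_2[d_4, d_6] equals the subalgebra F_2[d_4^2, d_6^2]. -/
open MvPolynomial

private lemma even_of_pderiv_eq_zero {n : ℕ} {u : MvPolynomial (Fin n) (ZMod 2)} {i : Fin n}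
    (h : pderiv i u = 0) {d : Fin n →₀ ℕ} (hd : d ∈ u.support) : Even (d i) := by
  by_contra hodd
  have hcast : ((d i : ℕ) : ZMod 2) = 1 := by
    obtain ⟨m, hm⟩ := Nat.not_even_iff_odd.mp hodd
    rw [hm]; push_cast; rw [(by decide : (2 : ZMod 2) = 0)]; ring
  have hdi : 1 ≤ d i := by
    rcases Nat.eq_zero_or_pos (d i) with h0 | h1
    · exact absurd (h0 ▸ Even.zero) hodd
    · exact h1
  have hc : coeff (d - Finsupp.single i 1) (pderiv i u) = coeff d u * ((d i : ℕ) : ZMod 2) := by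
    conv_lhs => rw [u.as_sum, map_sum, coeff_sum]
    simp only [pderiv_monomial, coeff_monomial]
    rw [Finset.sum_eq_single d]
    · simp
    · intro b hb hbd
      split_ifs with heq
      · rcases Nat.eq_zero_or_pos (b i) with h0 | h1
        · simp [h0]
        · exfalso
          apply hbd
          ext j
          have := DFunLike.congr_fun heq j
          simp only [Finsupp.tsub_apply, Finsupp.single_apply] at this
          by_cases hj : j = i
          · subst hj; simp at this; omega
          · simpa [Ne.symm hj] using this
      · rfl
    · intro hds; simp [MvPolynomial.notMem_support_iff.mp hds]
  rw [h] at hc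
  simp only [coeff_zero] at hc
  rw [hcast, mul_one] at hc
  exact MvPolynomial.mem_support_iff.mp hd hc.symm

private lemma exists_sq_of_pderiv_eq_zero {n : ℕ} {u : MvPolynomial (Fin n) (ZMod 2)}
    (h : ∀ i, pderiv i u = 0) : ∃ v, u = v ^ 2 := by
  refine ⟨∑ d ∈ u.support, monomial (Finsupp.mapRange (· / 2) (by simp) d) (coeff d u), ?_⟩
  rw [sum_pow_char]
  conv_lhs => rw [u.as_sum]
  refine Finset.sum_congr rfl fun d hd => ?_
  rw [monomial_pow]
  have h1 : 2 • Finsupp.mapRange (· / 2) (by simp) d = d := by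
    ext j
    obtain ⟨m, hm⟩ := even_of_pderiv_eq_zero (h j) hd
    simp only [Finsupp.smul_apply, Finsupp.mapRange_apply, hm, smul_eq_mul]
    omega
  have h2 : coeff d u ^ 2 = coeff d u := (by decide : ∀ a : ZMod 2, a ^ 2 = a) _
  rw [h1, h2]

private lemma aeval_ye_eq_zero {p : MvPolynomial (Fin 2) (ZMod 2)}
    (h : aeval ![X 1, X 0 * X 1 + X 0 ^ 3] p = (0 : MvPolynomial (Fin 2) (ZMod 2))) :
    p = 0 := by
  set E := finSuccEquiv (ZMod 2) 1 with hE
  set e' : Polynomial (MvPolynomial (Fin 1) (ZMod 2)) :=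
    Polynomial.X * Polynomial.C (X 0) + Polynomial.X ^ 3 with he'
  have hX1 : (X 1 : MvPolynomial (Fin 2) (ZMod 2)) = X (Fin.succ 0) := rfl
  have key : ∀ q : MvPolynomial (Fin 2) (ZMod 2),
      E (aeval ![X 1, X 0 * X 1 + X 0 ^ 3] q) = (E (rename (Equiv.swap 0 1) q)).comp e' := by
    intro q
    have hAlg : (E.toAlgHom.comp (aeval ![X 1, X 0 * X 1 + X 0 ^ 3])) =
        (((Polynomial.aeval e').restrictScalars (ZMod 2)).comp
          (E.toAlgHom.comp (rename (Equiv.swap 0 1)))) := by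
      apply MvPolynomial.algHom_ext
      intro i
      fin_cases i <;>
        simp [hE, hX1, finSuccEquiv_X_succ, finSuccEquiv_X_zero, Equiv.swap_apply_left,
          Equiv.swap_apply_right, Polynomial.aeval_X, he']
    have := AlgHom.congr_fun hAlg q
    simpa [Polynomial.comp_eq_aeval] using this
  have h2 : (E (rename (Equiv.swap 0 1) p)).comp e' = 0 := by rw [← key, h, map_zero]
  rcases Polynomial.comp_eq_zero_iff.mp h2 with h3 | ⟨-, h4⟩
  · have h5 : rename (Equiv.swap 0 1) p = 0 := by
      apply E.injective; simpa using h3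
    have h6 := rename_injective (R := ZMod 2) _ (Equiv.swap (0 : Fin 2) 1).injective
    apply h6
    simpa using h5
  · exfalso
    have := congrArg (fun f => Polynomial.coeff f 3) h4
    simp [he'] at this

private lemma pderiv_aeval_two (g : Fin 2 → MvPolynomial (Fin 3) (ZMod 2)) (i : Fin 3)
    (u : MvPolynomial (Fin 2) (ZMod 2)) :
    pderiv i (aeval g u) =
      aeval g (pderiv 0 u) * pderiv i (g 0) + aeval g (pderiv 1 u) * pderiv i (g 1) := by
  induction u using MvPolynomial.induction_on with
  | C a => simp [algebraMap_eq, pderiv_C]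
  | add p q hp hq => simp only [map_add, pderiv_mul, hp, hq, Derivation.map_add]; ring
  | mul_X p j hp =>
    fin_cases j <;>
      · simp +decide only [map_mul, pderiv_mul, hp, aeval_X, pderiv_X, Derivation.map_add,
          Pi.single_apply, if_true, if_false, map_zero, map_one, map_add, Fin.mk_zero, Fin.mk_one]
        ring

private lemma pderiv_adjoin_zero {i : Fin 3} (hi : i ≠ 1)
    {q : MvPolynomial (Fin 3) (ZMod 2)}
    (hq : q ∈ Algebra.adjoin (ZMod 2)
      ({X 1, X 0 ^ 2, X 2 ^ 2} : Set (MvPolynomial (Fin 3) (ZMod 2)))) :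
    pderiv i q = 0 := by
  have h2 : ((2 : ℕ) : MvPolynomial (Fin 3) (ZMod 2)) = 0 := CharP.cast_eq_zero _ 2
  induction hq using Algebra.adjoin_induction with
  | mem x hx =>
    rcases hx with rfl | rfl | rfl
    · exact pderiv_X_of_ne (Ne.symm hi)
    · rw [pderiv_pow, h2]; ring
    · rw [pderiv_pow, h2]; ring
  | algebraMap r => simp [algebraMap_eq, pderiv_C]
  | add x y hx hy ihx ihy => rw [map_add, ihx, ihy, add_zero]
  | mul x y hx hy ihx ihy => rw [pderiv_mul, ihx, ihy]; ring

private lemma sq_mem_adjoin_sq {w₁ w₂ a : MvPolynomial (Fin 3) (ZMod 2)}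
    (ha : a ∈ Algebra.adjoin (ZMod 2) ({w₁, w₂} : Set (MvPolynomial (Fin 3) (ZMod 2)))) :
    a ^ 2 ∈ Algebra.adjoin (ZMod 2) ({w₁ ^ 2, w₂ ^ 2} : Set (MvPolynomial (Fin 3) (ZMod 2))) := by
  induction ha using Algebra.adjoin_induction with
  | mem x hx =>
    rcases hx with rfl | rfl
    · exact Algebra.subset_adjoin (by simp)
    · exact Algebra.subset_adjoin (by simp)
  | algebraMap r => rw [← map_pow]; exact Subalgebra.algebraMap_mem _ _
  | add x y hx hy ihx ihy => rw [CharTwo.add_sq]; exact add_mem ihx ihy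
  | mul x y hx hy ihx ihy => rw [mul_pow]; exact mul_mem ihx ihy

set_option maxHeartbeats 2000000 in
/-- In `F₂[d₂, d₃, d₄]` with `d₆ = d₂d₄ + d₂³ + d₃²`, the intersection of the
`F₂[d₃, d₂², d₄²]`-submodule generated by `{1, d₂d₃, d₃d₄, d₂d₃d₄}` with the
subalgebra `F₂[d₄, d₆]` equals the subalgebra `F₂[d₄², d₆²]`. -/
theorem intersection_with_d4_d6_subalgebra
    (d₂ d₃ d₄ d₆ : MvPolynomial (Fin 3) (ZMod 2))
    (hd₂ : d₂ = X 0) (hd₃ : d₃ = X 1) (hd₄ : d₄ = X 2)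
    (hd₆ : d₆ = d₂ * d₄ + d₂ ^ 3 + d₃ ^ 2) :
    (Submodule.span
        ↥(Algebra.adjoin (ZMod 2) ({d₃, d₂ ^ 2, d₄ ^ 2} : Set (MvPolynomial (Fin 3) (ZMod 2))))
        ({1, d₂ * d₃, d₃ * d₄, d₂ * d₃ * d₄} : Set (MvPolynomial (Fin 3) (ZMod 2)))
          : Set (MvPolynomial (Fin 3) (ZMod 2))) ∩
      (Algebra.adjoin (ZMod 2) ({d₄, d₆} : Set (MvPolynomial (Fin 3) (ZMod 2)))
          : Set (MvPolynomial (Fin 3) (ZMod 2))) =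
      (Algebra.adjoin (ZMod 2) ({d₄ ^ 2, d₆ ^ 2} : Set (MvPolynomial (Fin 3) (ZMod 2)))
          : Set (MvPolynomial (Fin 3) (ZMod 2))) := by
  subst hd₆ hd₂ hd₃ hd₄
  set d6 : MvPolynomial (Fin 3) (ZMod 2) := X 0 * X 2 + X 0 ^ 3 + X 1 ^ 2 with hd6
  set Qs : Subalgebra (ZMod 2) (MvPolynomial (Fin 3) (ZMod 2)) :=
    Algebra.adjoin (ZMod 2) ({X 1, X 0 ^ 2, X 2 ^ 2} : Set (MvPolynomial (Fin 3) (ZMod 2))) with hQs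
  -- the auxiliary submodule cut out by divisibility conditions on partial derivatives
  set N : Submodule Qs (MvPolynomial (Fin 3) (ZMod 2)) :=
  { carrier := {f : MvPolynomial (Fin 3) (ZMod 2) | X 1 ∣ pderiv 0 f ∧ X 1 ∣ pderiv 2 f}
    add_mem' := fun ha hb => ⟨by rw [map_add]; exact dvd_add ha.1 hb.1,
      by rw [map_add]; exact dvd_add ha.2 hb.2⟩
    zero_mem' := by simp
    smul_mem' := fun q f hf => by
      have hq0 : pderiv 0 (q : MvPolynomial (Fin 3) (ZMod 2)) = 0 := pderiv_adjoin_zero (by decide) q.2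
      have hq2 : pderiv 2 (q : MvPolynomial (Fin 3) (ZMod 2)) = 0 := pderiv_adjoin_zero (by decide) q.2
      constructor
      · rw [Subalgebra.smul_def, smul_eq_mul, pderiv_mul, hq0, zero_mul, zero_add]
        exact (hf.1).mul_left _
      · rw [Subalgebra.smul_def, smul_eq_mul, pderiv_mul, hq2, zero_mul, zero_add]
        exact (hf.2).mul_left _ } with hNdef
  have hrange : Set.range ![X 2, d6] = ({X 2, d6} : Set (MvPolynomial (Fin 3) (ZMod 2))) := by
    ext x
    constructor
    · rintro ⟨i, rfl⟩; fin_cases i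
      · exact Or.inl rfl
      · exact Or.inr rfl
    · rintro (rfl | rfl)
      · exact ⟨0, rfl⟩
      · exact ⟨1, rfl⟩
  ext f
  simp only [Set.mem_inter_iff, SetLike.mem_coe]
  constructor
  · rintro ⟨hfM, hfA⟩
    -- write f as a polynomial in d₄ and d₆
    obtain ⟨u, hu⟩ : ∃ u, aeval ![X 2, d6] u = f := by
      have h1 := Algebra.adjoin_range_eq_range_aeval (ZMod 2) ![X 2, d6]
      rw [hrange] at h1
      rw [h1] at hfA
      exact hfA
    -- divisibility of derivatives
    have hMN : Submodule.span Qs ({1, X 0 * X 1, X 1 * X 2, X 0 * X 1 * X 2} : Set (MvPolynomial (Fin 3) (ZMod 2))) ≤ N := by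
      rw [Submodule.span_le]
      rintro x hx
      simp only [Set.mem_insert_iff, Set.mem_singleton_iff] at hx
      rcases hx with rfl | rfl | rfl | rfl
      · exact ⟨by simp, by simp⟩
      · constructor
        · have : pderiv 0 (X 0 * X 1 : MvPolynomial (Fin 3) (ZMod 2)) = X 1 := by
            rw [pderiv_mul, pderiv_X_self, pderiv_X_of_ne (by decide), one_mul, mul_zero, add_zero]
          rw [this]
        · have : pderiv 2 (X 0 * X 1 : MvPolynomial (Fin 3) (ZMod 2)) = 0 := by
            rw [pderiv_mul, pderiv_X_of_ne (by decide), pderiv_X_of_ne (by decide)]; ring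
          rw [this]; exact dvd_zero _
      · constructor
        · have : pderiv 0 (X 1 * X 2 : MvPolynomial (Fin 3) (ZMod 2)) = 0 := by
            rw [pderiv_mul, pderiv_X_of_ne (by decide), pderiv_X_of_ne (by decide)]; ring
          rw [this]; exact dvd_zero _
        · have : pderiv 2 (X 1 * X 2 : MvPolynomial (Fin 3) (ZMod 2)) = X 1 := by
            rw [pderiv_mul, pderiv_X_self, pderiv_X_of_ne (by decide), mul_one, zero_mul, zero_add]
          rw [this]
      · constructor
        · have : pderiv 0 (X 0 * X 1 * X 2 : MvPolynomial (Fin 3) (ZMod 2)) = X 1 * X 2 := by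
            rw [pderiv_mul, pderiv_mul, pderiv_X_self, pderiv_X_of_ne (by decide),
              pderiv_X_of_ne (by decide)]
            ring
          rw [this]; exact Dvd.dvd.mul_right dvd_rfl _
        · have : pderiv 2 (X 0 * X 1 * X 2 : MvPolynomial (Fin 3) (ZMod 2)) = X 0 * X 1 := by
            rw [pderiv_mul, pderiv_mul, pderiv_X_self, pderiv_X_of_ne (by decide),
              pderiv_X_of_ne (by decide)]
            ring
          rw [this]; exact Dvd.dvd.mul_left dvd_rfl _
    obtain ⟨hdvd0, hdvd2⟩ := hMN hfM
    -- substitute d₃ ↦ 0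
    set π : MvPolynomial (Fin 3) (ZMod 2) →ₐ[ZMod 2] MvPolynomial (Fin 2) (ZMod 2) :=
      aeval ![X 0, 0, X 1] with hπ
    have hπ0' : π (X 0) = X 0 := by rw [hπ, aeval_X]; rfl
    have hπ1 : π (X 1) = 0 := by rw [hπ, aeval_X]; rfl
    have hπ2' : π (X 2) = X 1 := by rw [hπ, aeval_X]; rfl
    have hπd6 : π d6 = X 0 * X 1 + X 0 ^ 3 := by
      rw [hd6]
      simp only [map_add, map_mul, map_pow, hπ0', hπ1, hπ2']
      ring
    have hπg : (fun i => π (![X 2, d6] i)) = ![X 1, X 0 * X 1 + X 0 ^ 3] := by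
      funext i
      fin_cases i
      · simpa using hπ2'
      · simpa using hπd6
    -- derivative computations
    have c2 : ((2 : ℕ) : MvPolynomial (Fin 3) (ZMod 2)) = 0 := CharP.cast_eq_zero _ 2
    have c3 : ((3 : ℕ) : MvPolynomial (Fin 3) (ZMod 2)) = 1 := by
      rw [show ((3 : ℕ) : MvPolynomial (Fin 3) (ZMod 2)) = ((2 : ℕ) : MvPolynomial (Fin 3) (ZMod 2)) + 1 by push_cast; ring, c2, zero_add]
    have hpd0 : pderiv 0 d6 = X 2 + X 0 ^ 2 := by
      rw [hd6, map_add, map_add, pderiv_mul, pderiv_pow, pderiv_pow,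
        pderiv_X_self, pderiv_X_of_ne (by decide), pderiv_X_of_ne (by decide), c2, c3]
      ring
    have hpd2 : pderiv 2 d6 = X 0 := by
      rw [hd6, map_add, map_add, pderiv_mul, pderiv_pow, pderiv_pow,
        pderiv_X_self, pderiv_X_of_ne (by decide), pderiv_X_of_ne (by decide), c2]
      ring
    -- first: pderiv 1 u = 0
    have hch0 := pderiv_aeval_two ![X 2, d6] 0 u
    rw [hu] at hch0
    simp only [Matrix.cons_val_zero, Matrix.cons_val_one, Matrix.head_cons] at hch0
    rw [pderiv_X_of_ne (by decide), hpd0, mul_zero, zero_add] at hch0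
    have hπ0 : π (pderiv 0 f) = 0 := by
      obtain ⟨c, hc⟩ := hdvd0
      rw [hc, map_mul, hπ1, zero_mul]
    rw [hch0, map_mul, comp_aeval_apply, hπg] at hπ0
    have hπfac : π (X 2 + X 0 ^ 2) = X 1 + X 0 ^ 2 := by
      rw [map_add, map_pow, hπ0', hπ2']
    rw [hπfac] at hπ0
    have hne : (X 1 + X 0 ^ 2 : MvPolynomial (Fin 2) (ZMod 2)) ≠ 0 := by
      intro hcon
      have := congrArg (eval ![0, 1]) hcon
      simp at this
    have hu1 : pderiv 1 u = 0 := by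
      rcases mul_eq_zero.mp hπ0 with h0 | h0
      · exact aeval_ye_eq_zero h0
      · exact absurd h0 hne
    -- second: pderiv 0 u = 0
    have hch2 := pderiv_aeval_two ![X 2, d6] 2 u
    rw [hu] at hch2
    simp only [Matrix.cons_val_zero, Matrix.cons_val_one, Matrix.head_cons] at hch2
    rw [pderiv_X_self, hpd2, hu1, map_zero, zero_mul, add_zero, mul_one] at hch2
    have hπ2 : π (pderiv 2 f) = 0 := by
      obtain ⟨c, hc⟩ := hdvd2
      rw [hc, map_mul, hπ1, zero_mul]
    rw [hch2, comp_aeval_apply, hπg] at hπ2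
    have hu0 : pderiv 0 u = 0 := aeval_ye_eq_zero hπ2
    -- extract the square root
    obtain ⟨v, hv⟩ := exists_sq_of_pderiv_eq_zero (u := u) (fun i => by
      fin_cases i
      · exact hu0
      · exact hu1)
    have hvmem : aeval ![X 2, d6] v ∈ Algebra.adjoin (ZMod 2) ({X 2, d6} : Set (MvPolynomial (Fin 3) (ZMod 2))) := by
      rw [← hrange, Algebra.adjoin_range_eq_range_aeval]
      exact ⟨v, rfl⟩
    rw [← hu, hv, map_pow]
    exact sq_mem_adjoin_sq hvmem
  · intro hb
    have hBQ : Algebra.adjoin (ZMod 2) ({X 2 ^ 2, d6 ^ 2} : Set (MvPolynomial (Fin 3) (ZMod 2))) ≤ Qs := by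
      apply Algebra.adjoin_le
      rintro x (rfl | rfl)
      · exact Algebra.subset_adjoin (by simp)
      · have hsq : d6 ^ 2 = (X 0 * X 2) ^ 2 + (X 0 ^ 3) ^ 2 + (X 1 ^ 2) ^ 2 := by
          rw [hd6, CharTwo.add_sq, CharTwo.add_sq]
        rw [hsq]
        refine add_mem (add_mem ?_ ?_) ?_
        · rw [show ((X 0 * X 2 : MvPolynomial (Fin 3) (ZMod 2))) ^ 2 = X 0 ^ 2 * X 2 ^ 2 by ring]
          exact mul_mem (Algebra.subset_adjoin (by simp)) (Algebra.subset_adjoin (by simp))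
        · rw [show ((X 0 ^ 3 : MvPolynomial (Fin 3) (ZMod 2))) ^ 2 = (X 0 ^ 2) ^ 3 by ring]
          exact pow_mem (Algebra.subset_adjoin (by simp)) 3
        · rw [show ((X 1 ^ 2 : MvPolynomial (Fin 3) (ZMod 2))) ^ 2 = (X 1) ^ 4 by ring]
          exact pow_mem (Algebra.subset_adjoin (by simp)) 4
    constructor
    · have h1 : (1 : MvPolynomial (Fin 3) (ZMod 2)) ∈ Submodule.span Qs ({1, X 0 * X 1, X 1 * X 2, X 0 * X 1 * X 2} : Set (MvPolynomial (Fin 3) (ZMod 2))) :=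
        Submodule.subset_span (by simp)
      have h2 := Submodule.smul_mem
        (Submodule.span Qs ({1, X 0 * X 1, X 1 * X 2, X 0 * X 1 * X 2} : Set (MvPolynomial (Fin 3) (ZMod 2))))
        (⟨f, hBQ hb⟩ : Qs) h1
      simpa [Subalgebra.smul_def] using h2
    · revert hb
      apply Algebra.adjoin_le
      rintro x (rfl | rfl)
      · exact pow_mem (Algebra.subset_adjoin (by simp)) 2
      · exact pow_mem (Algebra.subset_adjoin (by simp)) 2
end

section
/- In the polynomial ring F_2[w, t, z], set d_2 = w^2 + wt + t^2, d_3 = wt(w + t), and d_4 = z^4 + z^2 d_2 + z d_3 + d_2^2. Then the intersection of the F_2[w, d_2^2, d_4^2]-submodule of F_2[w, t, z] generated by {1, d_3, d_3 d_4, t(t+w) d_3 d_4} with the subalgebra F_2[d_2, d_3, d_4] equals the F_2[d_2^2, d_3, d_4^2]-submodule generated by {1, d_2 d_3, d_3 d_4, d_2 d_3 d_4}. -/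
open MvPolynomial
noncomputable section
abbrev R3 : Type := MvPolynomial (Fin 3) (ZMod 2)
abbrev P2 : Type := MvPolynomial (Fin 2) (ZMod 2)

lemma two_R3 : (2 : R3) = 0 := by
  have := CharP.cast_eq_zero R3 2
  exact_mod_cast this

-- L1: squares through aeval
lemma sq_aeval {n : ℕ} (v : Fin n → R3) (p : MvPolynomial (Fin n) (ZMod 2)) :
    (aeval (R := ZMod 2) (fun i => v i ^ 2)) p = ((aeval (R := ZMod 2) v) p) ^ 2 := by
  induction p using MvPolynomial.induction_on with
  | C a =>
      have ha : a ^ 2 = a := by revert a; decide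
      rw [aeval_C, aeval_C, ← map_pow, ha]
  | add p q hp hq =>
      rw [map_add, map_add, hp, hq]
      linear_combination (-((aeval (R := ZMod 2) v) p * (aeval (R := ZMod 2) v) q)) * two_R3
  | mul_X p i hp => rw [map_mul, map_mul, hp, aeval_X, aeval_X, mul_pow]

def e2 : R3 := X 2 ^ 2 + X 2 * X 1 + X 1 ^ 2
def nu : P2 →ₐ[ZMod 2] R3 := aeval ![X 1, e2]

-- L2 : injectivity of nu
lemma nu_inj : Function.Injective nu := by
  set K := FractionRing P2 with hK
  set Om := AlgebraicClosure K with hOm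
  have h1 : Function.Injective (algebraMap P2 K) := IsFractionRing.injective _ _
  have h2 : Function.Injective (algebraMap K Om) := RingHom.injective _
  have hmap : (algebraMap P2 Om) = (algebraMap K Om).comp (algebraMap P2 K) :=
    IsScalarTower.algebraMap_eq _ _ _
  have hinj : Function.Injective (algebraMap P2 Om) := by rw [hmap]; exact h2.comp h1
  set α : Om := algebraMap P2 Om (X 0) with hα
  set β : Om := algebraMap P2 Om (X 1) with hβdef
  have h2Om : (2 : Om) = 0 := by
    have := CharP.cast_eq_zero Om 2
    exact_mod_cast this
  obtain ⟨ζ, hζ⟩ : ∃ ζ : Om, (Polynomial.X ^ 2 + Polynomial.C α * Polynomial.X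
      + Polynomial.C (α ^ 2 + β)).IsRoot ζ := by
    apply IsAlgClosed.exists_root
    have hd : (Polynomial.X ^ 2 + (Polynomial.C α * Polynomial.X
        + Polynomial.C (α ^ 2 + β)) : Polynomial Om).degree = 2 := by
      rw [Polynomial.degree_add_eq_left_of_degree_lt]
      · exact Polynomial.degree_X_pow 2
      · rw [Polynomial.degree_X_pow]
        exact lt_of_le_of_lt (Polynomial.degree_linear_le) (by norm_num)
    rw [← add_assoc] at hd
    rw [hd]; norm_num
  have hroot : ζ ^ 2 + ζ * α + α ^ 2 = β := by
    have h := hζ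
    simp only [Polynomial.IsRoot, Polynomial.eval_add, Polynomial.eval_pow,
      Polynomial.eval_mul, Polynomial.eval_X, Polynomial.eval_C] at h
    linear_combination h - β * h2Om
  set j : R3 →ₐ[ZMod 2] Om := aeval ![0, α, ζ] with hj
  have hcomp : (j.comp nu) = aeval ![α, β] := by
    apply MvPolynomial.algHom_ext
    intro i
    fin_cases i
    · simp [nu, j]
    · simp [nu, e2, j, ← hroot]
  have hab : ∀ p : P2, (aeval (R := ZMod 2) ![α, β]) p = algebraMap P2 Om p := by
    intro p
    induction p using MvPolynomial.induction_on with
    | C a =>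
        rw [aeval_C]
        have : (C a : P2) = algebraMap (ZMod 2) P2 a := rfl
        rw [this, ← IsScalarTower.algebraMap_apply]
    | add p q hp hq => rw [map_add, map_add, hp, hq]
    | mul_X p i hp =>
        rw [map_mul, map_mul, hp, aeval_X]
        congr 1
        fin_cases i
        · exact hα
        · exact hβdef
  intro p q hpq
  apply hinj
  rw [← hab p, ← hab q]
  have : j (nu p) = j (nu q) := by rw [hpq]
  rwa [← AlgHom.comp_apply, ← AlgHom.comp_apply, hcomp] at this

def kap : R3 →ₐ[ZMod 2] P2 := aeval ![X 0, 0, X 1]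

-- L3 : if setting var 1 to zero kills p, then X 1 divides p
lemma X1_factor (p : R3) : ∃ s : R3, p = (aeval (R := ZMod 2) ![X 0, 0, X 2]) p + X 1 * s := by
  induction p using MvPolynomial.induction_on with
  | C a => exact ⟨0, by simp⟩
  | add p q hp hq =>
      obtain ⟨s, hs⟩ := hp; obtain ⟨u, hu⟩ := hq
      exact ⟨s + u, by rw [map_add]; nth_rewrite 1 [hs, hu]; ring⟩
  | mul_X p i hp =>
      obtain ⟨s, hs⟩ := hp
      fin_cases i
      · exact ⟨s * X 0, by rw [map_mul, aeval_X]; nth_rewrite 1 [hs]; simp; ring⟩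
      · exact ⟨p, by simp [mul_comm]⟩
      · exact ⟨s * X 2, by rw [map_mul, aeval_X]; nth_rewrite 1 [hs]; simp; ring⟩

lemma kap_zero_factor (p : R3) (h : kap p = 0) : ∃ s : R3, p = X 1 * s := by
  obtain ⟨s, hs⟩ := X1_factor p
  refine ⟨s, ?_⟩
  have hcomp : (aeval (R := ZMod 2) ![X 0, 0, X 2]) p
      = (aeval (R := ZMod 2) ![(X 0 : R3), X 2]) (kap p) := by
    rw [kap, ← AlgHom.comp_apply]
    congr 1
    apply MvPolynomial.algHom_ext
    intro i
    fin_cases i <;> simp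
  rw [hcomp, h, map_zero, zero_add] at hs
  exact hs

-- gamma relation : aeval ![X 1, 0, e2] p = nu (kap p)
lemma gamma_eq (p : R3) : (aeval (R := ZMod 2) ![X 1, 0, e2]) p = nu (kap p) := by
  rw [nu, kap, ← AlgHom.comp_apply]
  congr 1
  apply MvPolynomial.algHom_ext
  intro i
  fin_cases i <;> simp

-- L4 : parity-square decomposition
lemma decomp8 (p : R3) : ∃ a b c d e f g h : R3,
    p = a ^ 2 + X 0 * b ^ 2 + X 1 * c ^ 2 + X 2 * d ^ 2 + X 0 * X 1 * e ^ 2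
      + X 0 * X 2 * f ^ 2 + X 1 * X 2 * g ^ 2 + X 0 * X 1 * X 2 * h ^ 2 := by
  induction p using MvPolynomial.induction_on with
  | C r =>
      refine ⟨C r, 0, 0, 0, 0, 0, 0, 0, ?_⟩
      have : (C r : R3) ^ 2 = C r := by
        rw [← map_pow]
        congr 1
        revert r; decide
      rw [this]; ring
  | add p q hp hq =>
      obtain ⟨a, b, c, d, e, f, g, h, hp⟩ := hp
      obtain ⟨a', b', c', d', e', f', g', h', hq⟩ := hq
      refine ⟨a + a', b + b', c + c', d + d', e + e', f + f', g + g', h + h', ?_⟩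
      rw [hp, hq]
      linear_combination (-(a*a') - X 0 * (b*b') - X 1 * (c*c') - X 2 * (d*d')
        - X 0 * X 1 * (e*e') - X 0 * X 2 * (f*f') - X 1 * X 2 * (g*g')
        - X 0 * X 1 * X 2 * (h*h')) * two_R3
  | mul_X p i hp =>
      obtain ⟨a, b, c, d, e, f, g, h, hp⟩ := hp
      fin_cases i
      · exact ⟨X 0 * b, a, X 0 * e, X 0 * f, c, d, X 0 * h, g, by show p * X 0 = _; rw [hp]; ring⟩
      · exact ⟨X 1 * c, X 1 * e, a, X 1 * g, b, X 1 * h, d, f, by show p * X 1 = _; rw [hp]; ring⟩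
      · exact ⟨X 2 * d, X 2 * f, X 2 * g, a, X 2 * h, b, c, e, by show p * X 2 = _; rw [hp]; ring⟩

-- L5 : adjoin membership gives aeval representation
lemma mem_adjoin3 {a b c x : R3} (hx : x ∈ Algebra.adjoin (ZMod 2) ({a, b, c} : Set R3)) :
    ∃ p : R3, x = (aeval (R := ZMod 2) ![a, b, c]) p := by
  induction hx using Algebra.adjoin_induction with
  | mem y hy =>
      rcases hy with h | h | h
      · exact ⟨X 0, by simp [h]⟩
      · exact ⟨X 1, by simp [h]⟩
      · exact ⟨X 2, by rw [show y = c from h]; simp⟩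
  | algebraMap r => exact ⟨C r, by simp⟩
  | add y z hy hz hy' hz' =>
      obtain ⟨p, hp⟩ := hy'; obtain ⟨q, hq⟩ := hz'
      exact ⟨p + q, by rw [map_add, hp, hq]⟩
  | mul y z hy hz hy' hz' =>
      obtain ⟨p, hp⟩ := hy'; obtain ⟨q, hq⟩ := hz'
      exact ⟨p * q, by rw [map_mul, hp, hq]⟩

lemma mem_adjoin2 {a b x : R3} (hx : x ∈ Algebra.adjoin (ZMod 2) ({a, b} : Set R3)) :
    ∃ p : P2, x = (aeval (R := ZMod 2) ![a, b]) p := by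
  induction hx using Algebra.adjoin_induction with
  | mem y hy =>
      rcases hy with h | h
      · exact ⟨X 0, by simp [h]⟩
      · exact ⟨X 1, by rw [show y = b from h]; simp⟩
  | algebraMap r => exact ⟨C r, by simp⟩
  | add y z hy hz hy' hz' =>
      obtain ⟨p, hp⟩ := hy'; obtain ⟨q, hq⟩ := hz'
      exact ⟨p + q, by rw [map_add, hp, hq]⟩
  | mul y z hy hz hy' hz' =>
      obtain ⟨p, hp⟩ := hy'; obtain ⟨q, hq⟩ := hz'
      exact ⟨p * q, by rw [map_mul, hp, hq]⟩

-- L5b : aeval lands in adjoin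
lemma aeval_mem_adjoin3 (a b c : R3) (p : R3) :
    (aeval (R := ZMod 2) ![a, b, c]) p ∈ Algebra.adjoin (ZMod 2) ({a, b, c} : Set R3) := by
  induction p using MvPolynomial.induction_on with
  | C r => rw [aeval_C]; exact Subalgebra.algebraMap_mem _ r
  | add p q hp hq => rw [map_add]; exact Subalgebra.add_mem _ hp hq
  | mul_X p i hp =>
      rw [map_mul]
      refine Subalgebra.mul_mem _ hp ?_
      rw [aeval_X]
      apply Algebra.subset_adjoin
      fin_cases i
      · exact Or.inl rfl
      · exact Or.inr (Or.inl rfl)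
      · exact Or.inr (Or.inr rfl)

-- L6 : square of adjoin member lies in adjoin of squares (middle generator kept)
lemma sq_mem_adjoin {a b c x : R3} (hx : x ∈ Algebra.adjoin (ZMod 2) ({a, b, c} : Set R3)) :
    x ^ 2 ∈ Algebra.adjoin (ZMod 2) ({a ^ 2, b, c ^ 2} : Set R3) := by
  induction hx using Algebra.adjoin_induction with
  | mem y hy =>
      rcases hy with h | h | h
      · subst h; exact Algebra.subset_adjoin (Or.inl rfl)
      · have hb : b ∈ Algebra.adjoin (ZMod 2) ({a ^ 2, b, c ^ 2} : Set R3) :=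
          Algebra.subset_adjoin (Or.inr (Or.inl rfl))
        subst h; exact Subalgebra.pow_mem _ hb 2
      · subst h; exact Algebra.subset_adjoin (Or.inr (Or.inr rfl))
  | algebraMap r => rw [← map_pow]; exact Subalgebra.algebraMap_mem _ _
  | add y z hy hz hy' hz' =>
      have : (y + z) ^ 2 = y ^ 2 + z ^ 2 := by
        linear_combination (y * z) * two_R3
      rw [this]; exact Subalgebra.add_mem _ hy' hz'
  | mul y z hy hz hy' hz' =>
      rw [mul_pow]; exact Subalgebra.mul_mem _ hy' hz'

-- pderiv of squares vanish
lemma pderiv_sq (i : Fin 3) (y : R3) : (pderiv i) (y ^ 2) = 0 := by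
  rw [pow_two, pderiv_mul]
  rw [mul_comm y ((pderiv i) y), ← two_mul, two_R3]
  simp

lemma pd2_e2 : (pderiv 2) e2 = X 1 := by
  rw [e2, map_add, map_add, pderiv_sq, pderiv_sq, pderiv_mul]
  simp [pderiv_X_self, pderiv_X_of_ne (show (2:Fin 3) ≠ 1 by decide)]

lemma pd2_main (A B C D E : R3) :
    (pderiv 2) (A ^ 2 + B ^ 2 + X 1 * C ^ 2 + e2 * D ^ 2 + X 1 * e2 * E ^ 2)
      = X 1 * D ^ 2 + X 1 * X 1 * E ^ 2 := by
  rw [map_add, map_add, map_add, map_add, pderiv_sq, pderiv_sq, pderiv_mul, pderiv_mul,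
    pderiv_mul, pderiv_mul, pderiv_sq, pderiv_sq, pderiv_sq, pd2_e2,
    pderiv_X_of_ne (show (1:Fin 3) ≠ 2 by decide)]
  ring

lemma pd1_E1 (D E : R3) : (pderiv 1) (X 1 * D ^ 2 + X 1 * X 1 * E ^ 2) = D ^ 2 := by
  rw [map_add, pderiv_mul, pderiv_mul, pderiv_mul, pderiv_sq, pderiv_sq, pderiv_X_self]
  linear_combination (X 1 * E ^ 2) * two_R3

lemma pd1_main (A B C : R3) : (pderiv 1) (A ^ 2 + B ^ 2 + X 1 * C ^ 2) = C ^ 2 := by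
  rw [map_add, map_add, pderiv_sq, pderiv_sq, pderiv_mul, pderiv_sq, pderiv_X_self]
  ring

lemma sq_inj (x y : R3) (h : x ^ 2 = y ^ 2) : x = y := by
  have h2 : (x + y) ^ 2 = 0 := by linear_combination h + (x * y + y * y) * two_R3
  have h3 : x + y = 0 := by
    exact pow_eq_zero_iff (two_ne_zero) |>.mp h2
  linear_combination h3 + (-y) * two_R3


lemma smul_sub_def (S : Subalgebra (ZMod 2) R3) (a : S) (y : R3) : a • y = (a : R3) * y := rfl

set_option maxHeartbeats 1000000 in
/-- In `F₂[w, t, z]` with Dickson invariants `d₂ = w² + wt + t²`,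
`d₃ = wt(w + t)` and `d₄ = z⁴ + z²d₂ + zd₃ + d₂²`, the intersection of the
`F₂[w, d₂², d₄²]`-submodule generated by `{1, d₃, d₃d₄, t(t+w)d₃d₄}` with the
subalgebra `F₂[d₂, d₃, d₄]` equals the `F₂[d₂², d₃, d₄²]`-submodule generated
by `{1, d₂d₃, d₃d₄, d₂d₃d₄}`. -/
theorem intersection_invariants_appendix
    (w t z d₂ d₃ d₄ : MvPolynomial (Fin 3) (ZMod 2))
    (hw : w = X 0) (ht : t = X 1) (hz : z = X 2)
    (hd₂ : d₂ = w ^ 2 + w * t + t ^ 2) (hd₃ : d₃ = w * t * (w + t))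
    (hd₄ : d₄ = z ^ 4 + z ^ 2 * d₂ + z * d₃ + d₂ ^ 2) :
    (Submodule.span
        ↥(Algebra.adjoin (ZMod 2) ({w, d₂ ^ 2, d₄ ^ 2} : Set (MvPolynomial (Fin 3) (ZMod 2))))
        ({1, d₃, d₃ * d₄, t * (t + w) * d₃ * d₄} : Set (MvPolynomial (Fin 3) (ZMod 2)))
          : Set (MvPolynomial (Fin 3) (ZMod 2))) ∩
      (Algebra.adjoin (ZMod 2) ({d₂, d₃, d₄} : Set (MvPolynomial (Fin 3) (ZMod 2)))
          : Set (MvPolynomial (Fin 3) (ZMod 2))) =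
      (Submodule.span
        ↥(Algebra.adjoin (ZMod 2) ({d₂ ^ 2, d₃, d₄ ^ 2} : Set (MvPolynomial (Fin 3) (ZMod 2))))
        ({1, d₂ * d₃, d₃ * d₄, d₂ * d₃ * d₄} : Set (MvPolynomial (Fin 3) (ZMod 2)))
          : Set (MvPolynomial (Fin 3) (ZMod 2))) := by
  have hSsub :
      ∀ {Sb : Subalgebra (ZMod 2) R3} {s y : R3} {Mo : Submodule ↥Sb R3},
        s ∈ Sb → y ∈ Mo → s * y ∈ Mo := by
    intro Sb s y Mo hs hy
    have := Mo.smul_mem (⟨s, hs⟩ : ↥Sb) hy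
    rwa [smul_sub_def] at this
  -- name the main objects
  set Ssub := Algebra.adjoin (ZMod 2) ({w, d₂ ^ 2, d₄ ^ 2} : Set R3) with hSsubdef
  set Bsub := Algebra.adjoin (ZMod 2) ({d₂ ^ 2, d₃, d₄ ^ 2} : Set R3) with hBsubdef
  set Asub := Algebra.adjoin (ZMod 2) ({d₂, d₃, d₄} : Set R3) with hAsubdef
  set M := Submodule.span ↥Ssub ({1, d₃, d₃ * d₄, t * (t + w) * d₃ * d₄} : Set R3) with hMdef
  set N := Submodule.span ↥Bsub ({1, d₂ * d₃, d₃ * d₄, d₂ * d₃ * d₄} : Set R3) with hNdef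
  -- basic memberships
  have hw_S : w ∈ Ssub := Algebra.subset_adjoin (Or.inl rfl)
  have hd22_S : d₂ ^ 2 ∈ Ssub := Algebra.subset_adjoin (Or.inr (Or.inl rfl))
  have hd42_S : d₄ ^ 2 ∈ Ssub := Algebra.subset_adjoin (Or.inr (Or.inr rfl))
  have hd22_B : d₂ ^ 2 ∈ Bsub := Algebra.subset_adjoin (Or.inl rfl)
  have hd3_B : d₃ ∈ Bsub := Algebra.subset_adjoin (Or.inr (Or.inl rfl))
  have hd42_B : d₄ ^ 2 ∈ Bsub := Algebra.subset_adjoin (Or.inr (Or.inr rfl))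
  have hd2_A : d₂ ∈ Asub := Algebra.subset_adjoin (Or.inl rfl)
  have hd3_A : d₃ ∈ Asub := Algebra.subset_adjoin (Or.inr (Or.inl rfl))
  have hd4_A : d₄ ∈ Asub := Algebra.subset_adjoin (Or.inr (Or.inr rfl))
  have hBA : Bsub ≤ Asub := by
    rw [hBsubdef]
    apply Algebra.adjoin_le
    rintro y (rfl | rfl | rfl)
    · exact Subalgebra.pow_mem _ hd2_A 2
    · exact hd3_A
    · exact Subalgebra.pow_mem _ hd4_A 2
  -- generators of M
  have hg1 : (1 : R3) ∈ M := Submodule.subset_span (Or.inl rfl)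
  have hg2 : d₃ ∈ M := Submodule.subset_span (Or.inr (Or.inl rfl))
  have hg3 : d₃ * d₄ ∈ M := Submodule.subset_span (Or.inr (Or.inr (Or.inl rfl)))
  have hg4 : t * (t + w) * d₃ * d₄ ∈ M := Submodule.subset_span (Or.inr (Or.inr (Or.inr rfl)))
  -- ring identities
  have id1 : d₃ * d₃ = (w ^ 2 * d₂ ^ 2 + w ^ 4 * w ^ 2) * 1 := by
    subst hd₄ hd₃ hd₂ hw ht hz
    linear_combination (-1 * X 0 ^ 4 * X 1 ^ 2 + -1 * X 0 ^ 5 * X 1 + -1 * X 0 ^ 6 : R3) * two_R3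
  have id2 : d₃ * (d₃ * d₄) = w * (t * (t + w) * d₃ * d₄) := by
    subst hd₄ hd₃ hd₂ hw ht hz; ring
  have id3 : d₃ * (t * (t + w) * d₃ * d₄) = ((d₂ ^ 2 + w ^ 4) * w) * (d₃ * d₄) := by
    subst hd₄ hd₃ hd₂ hw ht hz
    linear_combination (-1 * X 0 ^ 4 * X 1 ^ 4 * X 2 ^ 4 + -1 * X 0 ^ 4 * X 1 ^ 6 * X 2 ^ 2 + -1 * X 0 ^ 4 * X 1 ^ 8 + -2 * X 0 ^ 5 * X 1 ^ 3 * X 2 ^ 4 + -3 * X 0 ^ 5 * X 1 ^ 5 * X 2 ^ 2 + -1 * X 0 ^ 5 * X 1 ^ 6 * X 2 + -4 * X 0 ^ 5 * X 1 ^ 7 + -2 * X 0 ^ 6 * X 1 ^ 2 * X 2 ^ 4 + -5 * X 0 ^ 6 * X 1 ^ 4 * X 2 ^ 2 + -3 * X 0 ^ 6 * X 1 ^ 5 * X 2 + -9 * X 0 ^ 6 * X 1 ^ 6 + -1 * X 0 ^ 7 * X 1 * X 2 ^ 4 + -5 * X 0 ^ 7 * X 1 ^ 3 * X 2 ^ 2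 + -4 * X 0 ^ 7 * X 1 ^ 4 * X 2 + -13 * X 0 ^ 7 * X 1 ^ 5 + -3 * X 0 ^ 8 * X 1 ^ 2 * X 2 ^ 2 + -3 * X 0 ^ 8 * X 1 ^ 3 * X 2 + -13 * X 0 ^ 8 * X 1 ^ 4 + -1 * X 0 ^ 9 * X 1 * X 2 ^ 2 + -1 * X 0 ^ 9 * X 1 ^ 2 * X 2 + -9 * X 0 ^ 9 * X 1 ^ 3 + -4 * X 0 ^ 10 * X 1 ^ 2 + -1 * X 0 ^ 11 * X 1 : R3) * two_R3
  have id4 : d₂ * d₃ = (w * d₂ ^ 2 + w ^ 4 * w) * 1 + w ^ 2 * d₃ := by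
    subst hd₄ hd₃ hd₂ hw ht hz
    linear_combination (-1 * X 0 ^ 3 * X 1 ^ 2 + -1 * X 0 ^ 4 * X 1 + -1 * X 0 ^ 5 : R3) * two_R3
  have id5 : d₂ * (d₃ * d₄) = t * (t + w) * d₃ * d₄ + w ^ 2 * (d₃ * d₄) := by
    subst hd₄ hd₃ hd₂ hw ht hz; ring
  -- M is closed under multiplication by d₃
  have claim_d3 : ∀ y ∈ M, d₃ * y ∈ M := by
    intro y hy
    induction hy using Submodule.span_induction with
    | mem y hy =>
        rcases hy with rfl | rfl | rfl | h
        · rw [mul_one]; exact hg2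
        · rw [id1]; exact hSsub (Subalgebra.add_mem _ (Subalgebra.mul_mem _
            (Subalgebra.pow_mem _ hw_S 2) hd22_S) (Subalgebra.mul_mem _
            (Subalgebra.pow_mem _ hw_S 4) (Subalgebra.pow_mem _ hw_S 2))) hg1
        · rw [id2]; exact hSsub hw_S hg4
        · rw [show y = t * (t + w) * d₃ * d₄ from h, id3]
          exact hSsub (Subalgebra.mul_mem _ (Subalgebra.add_mem _ hd22_S
            (Subalgebra.pow_mem _ hw_S 4)) hw_S) hg3
    | zero => rw [mul_zero]; exact Submodule.zero_mem _
    | add y z hy hz hy' hz' => rw [mul_add]; exact Submodule.add_mem _ hy' hz'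
    | smul a y hy hy' =>
        rw [mul_smul_comm]; exact Submodule.smul_mem _ _ hy'
  -- M is closed under multiplication by elements of Bsub
  have claim_B : ∀ b ∈ Bsub, ∀ y ∈ M, b * y ∈ M := by
    intro b hb
    induction hb using Algebra.adjoin_induction with
    | mem b hb =>
        rcases hb with rfl | rfl | h
        · exact fun y hy => hSsub hd22_S hy
        · exact claim_d3
        · rw [show b = d₄ ^ 2 from h]; exact fun y hy => hSsub hd42_S hy
    | algebraMap r =>
        intro y hy
        rcases (show r = 0 ∨ r = 1 from by revert r; decide) with rfl | rfl
        · rw [map_zero, zero_mul]; exact Submodule.zero_mem _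
        · rw [map_one, one_mul]; exact hy
    | add b c hb hc hb' hc' =>
        intro y hy
        rw [add_mul]; exact Submodule.add_mem _ (hb' y hy) (hc' y hy)
    | mul b c hb hc hb' hc' =>
        intro y hy
        rw [mul_assoc]; exact hb' _ (hc' y hy)
  -- N ⊆ M
  have hNM : ∀ x ∈ N, x ∈ M := by
    intro x hx
    induction hx using Submodule.span_induction with
    | mem y hy =>
        rcases hy with rfl | rfl | rfl | h
        · exact hg1
        · rw [id4]
          refine Submodule.add_mem _ ?_ ?_
          · exact hSsub (Subalgebra.add_mem _ (Subalgebra.mul_mem _ hw_S hd22_S)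
              (Subalgebra.mul_mem _ (Subalgebra.pow_mem _ hw_S 4) hw_S)) hg1
          · exact hSsub (Subalgebra.pow_mem _ hw_S 2) hg2
        · exact hg3
        · rw [show y = d₂ * d₃ * d₄ from h, mul_assoc, id5]
          exact Submodule.add_mem _ hg4 (hSsub (Subalgebra.pow_mem _ hw_S 2) hg3)
    | zero => exact Submodule.zero_mem _
    | add y z hy hz hy' hz' => exact Submodule.add_mem _ hy' hz'
    | smul a y hy hy' => rw [smul_sub_def]; exact claim_B _ a.2 _ hy'
  -- N ⊆ A
  have hNA : ∀ x ∈ N, x ∈ Asub := by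
    intro x hx
    induction hx using Submodule.span_induction with
    | mem y hy =>
        rcases hy with rfl | rfl | rfl | h
        · exact Subalgebra.one_mem _
        · exact Subalgebra.mul_mem _ hd2_A hd3_A
        · exact Subalgebra.mul_mem _ hd3_A hd4_A
        · rw [show y = d₂ * d₃ * d₄ from h]
          exact Subalgebra.mul_mem _ (Subalgebra.mul_mem _ hd2_A hd3_A) hd4_A
    | zero => exact Subalgebra.zero_mem _
    | add y z hy hz hy' hz' => exact Subalgebra.add_mem _ hy' hz'
    | smul a y hy hy' => rw [smul_sub_def]; exact Subalgebra.mul_mem _ (hBA a.2) hy'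
  ext x
  simp only [Set.mem_inter_iff, SetLike.mem_coe]
  constructor
  · rintro ⟨hxM, hxA⟩
    obtain ⟨P, hP⟩ := mem_adjoin3 hxA
    obtain ⟨pa, pb, pc, pd, pe, pf, pg, ph, hdec⟩ := decomp8 P
    set Phi := (aeval (R := ZMod 2) ![d₂, d₃, d₄] : R3 →ₐ[ZMod 2] R3) with hPhidef
    have hx_exp : x = (Phi pa) ^ 2 + d₂ * (Phi pb) ^ 2 + d₃ * (Phi pc) ^ 2 + d₄ * (Phi pd) ^ 2
        + d₂ * d₃ * (Phi pe) ^ 2 + d₂ * d₄ * (Phi pf) ^ 2 + d₃ * d₄ * (Phi pg) ^ 2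
        + d₂ * d₃ * d₄ * (Phi ph) ^ 2 := by
      rw [hP, hdec]
      simp only [hPhidef, map_add, map_mul, map_pow, aeval_X, Matrix.cons_val_zero,
        Matrix.cons_val_one, Matrix.head_cons, Matrix.cons_val_two, Matrix.tail_cons]
    set ev := (aeval (R := ZMod 2) ![0, X 1, X 2] : R3 →ₐ[ZMod 2] R3) with hevdef
    have hevd2 : ev d₂ = X 1 ^ 2 := by
      rw [hd₂, hw, ht, hevdef]
      simp
    have hevd3 : ev d₃ = 0 := by
      rw [hd₃, hw, ht, hevdef]
      simp
    have hevd4 : ev d₄ = e2 ^ 2 := by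
      rw [hd₄, hd₃, hd₂, hw, ht, hz, hevdef]
      simp only [map_add, map_mul, map_pow, aeval_X, Matrix.cons_val_zero, Matrix.cons_val_one,
        Matrix.head_cons, Matrix.cons_val_two, Matrix.tail_cons, e2]
      linear_combination (-1 * X 1 * X 2 ^ 3 + -1 * X 1 ^ 2 * X 2 ^ 2 + -1 * X 1 ^ 3 * X 2 : R3)
        * two_R3
    -- ev x lies in the adjoin of {X1^4, e2^4}
    have hevM : ∀ y ∈ M, ev y ∈ Algebra.adjoin (ZMod 2) ({X 1 ^ 4, e2 ^ 4} : Set R3) := by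
      intro y hyM
      induction hyM using Submodule.span_induction with
      | mem y hy =>
          rcases hy with rfl | rfl | rfl | h
          · rw [map_one]; exact Subalgebra.one_mem _
          · rw [hevd3]; exact Subalgebra.zero_mem _
          · rw [map_mul, hevd3, zero_mul]; exact Subalgebra.zero_mem _
          · rw [show y = t * (t + w) * d₃ * d₄ from h, map_mul, map_mul, hevd3, mul_zero,
              zero_mul]
            exact Subalgebra.zero_mem _
      | zero => rw [map_zero]; exact Subalgebra.zero_mem _
      | add y z hy hz hy' hz' => rw [map_add]; exact Subalgebra.add_mem _ hy' hz'
      | smul a y hy hy' =>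
          obtain ⟨s, hsS⟩ := a
          rw [smul_sub_def, map_mul]
          refine Subalgebra.mul_mem _ ?_ hy'
          show ev s ∈ Algebra.adjoin (ZMod 2) ({X 1 ^ 4, e2 ^ 4} : Set R3)
          rw [hSsubdef] at hsS
          induction hsS using Algebra.adjoin_induction with
          | mem v hv =>
              rcases hv with h | h | h
              · show ev v ∈ Algebra.adjoin (ZMod 2) ({X 1 ^ 4, e2 ^ 4} : Set R3)
                rw [h, hw, hevdef]
                simpa using Subalgebra.zero_mem
                  (Algebra.adjoin (ZMod 2) ({X 1 ^ 4, e2 ^ 4} : Set R3))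
              · show ev v ∈ Algebra.adjoin (ZMod 2) ({X 1 ^ 4, e2 ^ 4} : Set R3)
                rw [h, map_pow, hevd2]
                rw [show (X 1 ^ 2 : R3) ^ 2 = X 1 ^ 4 by ring]
                exact Algebra.subset_adjoin (Or.inl rfl)
              · show ev v ∈ Algebra.adjoin (ZMod 2) ({X 1 ^ 4, e2 ^ 4} : Set R3)
                rw [show v = d₄ ^ 2 from h, map_pow, hevd4]
                rw [show (e2 ^ 2 : R3) ^ 2 = e2 ^ 4 by ring]
                exact Algebra.subset_adjoin (Or.inr rfl)
          | algebraMap r =>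
              rw [AlgHom.commutes]; exact Subalgebra.algebraMap_mem _ r
          | add v u hv hu hv' hu' => rw [map_add]; exact Subalgebra.add_mem _ hv' hu'
          | mul v u hv hu hv' hu' => rw [map_mul]; exact Subalgebra.mul_mem _ hv' hu'
    obtain ⟨q, hq⟩ := mem_adjoin2 (hevM x hxM)
    -- square roots
    have hsqv : ∀ y : R3, (aeval (R := ZMod 2) ![X 1 ^ 2, (0:R3), e2 ^ 2]) y
        = ((aeval (R := ZMod 2) ![X 1, (0:R3), e2]) y) ^ 2 := by
      intro y
      have hv : (![X 1 ^ 2, (0:R3), e2 ^ 2] : Fin 3 → R3)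
          = fun i => (![X 1, (0:R3), e2] : Fin 3 → R3) i ^ 2 := by
        funext i; fin_cases i <;> simp
      rw [hv, sq_aeval]
    have hq4 : (aeval (R := ZMod 2) ![X 1 ^ 4, e2 ^ 4]) q = ((nu q) ^ 2) ^ 2 := by
      have hv1 : (![X 1 ^ 4, e2 ^ 4] : Fin 2 → R3)
          = fun i => (![X 1 ^ 2, e2 ^ 2] : Fin 2 → R3) i ^ 2 := by
        funext i; fin_cases i <;> simp <;> ring
      have hv2 : (![X 1 ^ 2, e2 ^ 2] : Fin 2 → R3)
          = fun i => (![X 1, e2] : Fin 2 → R3) i ^ 2 := by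
        funext i; fin_cases i <;> simp
      rw [hv1, sq_aeval, hv2, sq_aeval, nu]
    have hΦev : ∀ y : R3, ev (Phi y) = ((aeval (R := ZMod 2) ![X 1, (0:R3), e2]) y) ^ 2 := by
      intro y
      have hhom : (ev.comp Phi) = (aeval (R := ZMod 2) ![X 1 ^ 2, (0:R3), e2 ^ 2]) := by
        apply MvPolynomial.algHom_ext
        intro i
        fin_cases i
        · show ev (Phi (X 0)) = _
          rw [hPhidef]
          simp only [AlgHom.coe_comp, Function.comp_apply, aeval_X, Matrix.cons_val_zero]
          exact hevd2
        · show ev (Phi (X 1)) = _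
          rw [hPhidef]
          simp only [AlgHom.coe_comp, Function.comp_apply, aeval_X, Matrix.cons_val_one,
            Matrix.head_cons]
          exact hevd3
        · show ev (Phi (X 2)) = _
          rw [hPhidef]
          simp only [AlgHom.coe_comp, Function.comp_apply, aeval_X, Matrix.cons_val_two,
            Matrix.tail_cons, Matrix.head_cons]
          exact hevd4
      calc ev (Phi y) = (ev.comp Phi) y := rfl
        _ = _ := by rw [hhom]; exact hsqv y
    set u0 := (aeval (R := ZMod 2) ![X 1, (0:R3), e2]) pa with hu0
    set ub := (aeval (R := ZMod 2) ![X 1, (0:R3), e2]) pb with hub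
    set ud := (aeval (R := ZMod 2) ![X 1, (0:R3), e2]) pd with hudd
    set uf := (aeval (R := ZMod 2) ![X 1, (0:R3), e2]) pf with hufd
    have hev_exp : ev x = (u0 ^ 2) ^ 2 + X 1 ^ 2 * (ub ^ 2) ^ 2 + e2 ^ 2 * (ud ^ 2) ^ 2
        + X 1 ^ 2 * e2 ^ 2 * (uf ^ 2) ^ 2 := by
      rw [hx_exp]
      simp only [map_add, map_mul, map_pow, hevd2, hevd3, hevd4, hΦev]
      ring
    -- the square-rooted main equation
    have hmain : (nu q) ^ 2 = u0 ^ 2 + X 1 * ub ^ 2 + e2 * ud ^ 2 + X 1 * e2 * uf ^ 2 := by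
      apply sq_inj
      rw [← hq4, ← hq, hev_exp]
      linear_combination (-(u0 ^ 2 * X 1 * ub ^ 2 + u0 ^ 2 * e2 * ud ^ 2
        + u0 ^ 2 * X 1 * e2 * uf ^ 2 + X 1 * ub ^ 2 * e2 * ud ^ 2
        + X 1 * ub ^ 2 * X 1 * e2 * uf ^ 2 + e2 * ud ^ 2 * X 1 * e2 * uf ^ 2)) * two_R3
    have hzero : (nu q) ^ 2 + u0 ^ 2 + X 1 * ub ^ 2 + e2 * ud ^ 2 + X 1 * e2 * uf ^ 2 = 0 := by
      linear_combination hmain + (u0 ^ 2 + X 1 * ub ^ 2 + e2 * ud ^ 2 + X 1 * e2 * uf ^ 2)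
        * two_R3
    -- derivative games
    have E1 : X 1 * ud ^ 2 + X 1 * X 1 * uf ^ 2 = 0 := by
      rw [← pd2_main (nu q) u0 ub ud uf, hzero, map_zero]
    have hud2 : ud ^ 2 = 0 := by
      rw [← pd1_E1 ud uf, E1, map_zero]
    have hud0 : ud = 0 := by
      exact pow_eq_zero_iff (two_ne_zero) |>.mp hud2
    have huf0 : uf = 0 := by
      rw [hud0] at E1
      have E1' : X 1 * X 1 * uf ^ 2 = 0 := by linear_combination E1
      rcases mul_eq_zero.mp E1' with h | h
      · exact absurd (mul_self_eq_zero.mp h) (MvPolynomial.X_ne_zero 1)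
      · exact pow_eq_zero_iff (two_ne_zero) |>.mp h
    have hub0 : ub = 0 := by
      have hzero' : (nu q) ^ 2 + u0 ^ 2 + X 1 * ub ^ 2 = 0 := by
        linear_combination hzero - e2 * ud * hud0 - X 1 * e2 * uf * huf0
      have : ub ^ 2 = 0 := by rw [← pd1_main (nu q) u0 ub, hzero', map_zero]
      exact pow_eq_zero_iff (two_ne_zero) |>.mp this
    -- deduce divisibility by X 1 for pb, pd, pf
    have hfac : ∀ p : R3, (aeval (R := ZMod 2) ![X 1, (0:R3), e2]) p = 0 →
        ∃ s : R3, p = X 1 * s := by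
      intro p hp
      apply kap_zero_factor
      apply nu_inj
      rw [← gamma_eq, hp, map_zero]
    obtain ⟨sb, hsb⟩ := hfac pb hub0
    obtain ⟨sd, hsd⟩ := hfac pd hud0
    obtain ⟨sf, hsf⟩ := hfac pf huf0
    -- assemble membership in N
    have hPhiA : ∀ y : R3, Phi y ∈ Asub := by
      intro y
      rw [hPhidef, hAsubdef]
      exact aeval_mem_adjoin3 d₂ d₃ d₄ y
    have hPhisqB : ∀ y : R3, (Phi y) ^ 2 ∈ Bsub := by
      intro y
      rw [hBsubdef]
      exact sq_mem_adjoin (hAsubdef ▸ hPhiA y)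
    have n1 : (1 : R3) ∈ N := Submodule.subset_span (Or.inl rfl)
    have n2 : d₂ * d₃ ∈ N := Submodule.subset_span (Or.inr (Or.inl rfl))
    have n3 : d₃ * d₄ ∈ N := Submodule.subset_span (Or.inr (Or.inr (Or.inl rfl)))
    have n4 : d₂ * d₃ * d₄ ∈ N := Submodule.subset_span (Or.inr (Or.inr (Or.inr rfl)))
    have hPhib : Phi pb = d₃ * Phi sb := by
      rw [hsb, map_mul, hPhidef]
      simp
    have hPhid : Phi pd = d₃ * Phi sd := by
      rw [hsd, map_mul, hPhidef]
      simp
    have hPhif : Phi pf = d₃ * Phi sf := by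
      rw [hsf, map_mul, hPhidef]
      simp
    rw [hx_exp]
    refine Submodule.add_mem _ (Submodule.add_mem _ (Submodule.add_mem _ (Submodule.add_mem _
      (Submodule.add_mem _ (Submodule.add_mem _ (Submodule.add_mem _ ?_ ?_) ?_) ?_) ?_) ?_) ?_) ?_
    · rw [show (Phi pa) ^ 2 = (Phi pa) ^ 2 * 1 by ring]
      exact hSsub (hPhisqB pa) n1
    · rw [hPhib, show d₂ * (d₃ * Phi sb) ^ 2 = (d₃ * (Phi sb) ^ 2) * (d₂ * d₃) by ring]
      exact hSsub (Subalgebra.mul_mem _ hd3_B (hPhisqB sb)) n2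
    · rw [show d₃ * (Phi pc) ^ 2 = (d₃ * (Phi pc) ^ 2) * 1 by ring]
      exact hSsub (Subalgebra.mul_mem _ hd3_B (hPhisqB pc)) n1
    · rw [hPhid, show d₄ * (d₃ * Phi sd) ^ 2 = (d₃ * (Phi sd) ^ 2) * (d₃ * d₄) by ring]
      exact hSsub (Subalgebra.mul_mem _ hd3_B (hPhisqB sd)) n3
    · rw [show d₂ * d₃ * (Phi pe) ^ 2 = (Phi pe) ^ 2 * (d₂ * d₃) by ring]
      exact hSsub (hPhisqB pe) n2
    · rw [hPhif, show d₂ * d₄ * (d₃ * Phi sf) ^ 2 = (d₃ * (Phi sf) ^ 2) * (d₂ * d₃ * d₄) by ring]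
      exact hSsub (Subalgebra.mul_mem _ hd3_B (hPhisqB sf)) n4
    · rw [show d₃ * d₄ * (Phi pg) ^ 2 = (Phi pg) ^ 2 * (d₃ * d₄) by ring]
      exact hSsub (hPhisqB pg) n3
    · rw [show d₂ * d₃ * d₄ * (Phi ph) ^ 2 = (Phi ph) ^ 2 * (d₂ * d₃ * d₄) by ring]
      exact hSsub (hPhisqB ph) n4
  · intro hx
    exact ⟨hNM x hx, hNA x hx⟩
end
end

section
/- In the polynomial ring F_2[w, t], set d_2 = w^2 + wt + t^2 and d_3 = wt(w + t). Then the F_2-subalgebra F_2[w, d_2, d_3] of F_2[w, t] is a free module over its subring F_2[d_2, d_3] with basis {1, w, w^2}. -/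
/-!
Over `A = F₂[d₂, d₃]`, `w` is a root of the monic cubic `Y³ - d₂Y - d₃`, so `1, w, w²` span
`A[w] = F₂[w, d₂, d₃]`. For independence: the swap `w ↔ t` and the transvection `w ↦ w + t`
fix `d₂` and `d₃` (the latter only in characteristic 2), hence fix `A`, so a relation
`c₀ + c₁w + c₂w² = 0` over `A` also holds at `t` and `w + t`; as `w, t, w + t` are distinct in
the domain `F₂[w, t]`, the Vandermonde determinant forces `c = 0`.
-/

open MvPolynomial

open Polynomial in
theorem Polynomial.Monic.toSubmodule_adjoin_eq_span_pow {A S : Type*} [CommRing A] [Nontrivial A]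
    [Ring S] [Algebra A S] {p : A[X]} (hp : p.Monic) {x : S} (hx : aeval x p = 0)
    {n : ℕ} (hn : p.natDegree ≤ n) :
    Subalgebra.toSubmodule (Algebra.adjoin A {x}) =
      Submodule.span A (Set.range fun i : Fin n => x ^ (i : ℕ)) := by
  ext y
  rw [Subalgebra.mem_toSubmodule, Algebra.adjoin_singleton_eq_range_aeval,
    PowerBasis.mem_span_pow']
  constructor
  · rintro ⟨f, rfl⟩
    refine ⟨f %ₘ p, ?_, (aeval_modByMonic_eq_self_of_root hx).symm⟩
    exact (degree_modByMonic_lt f hp).trans_le (degree_le_of_natDegree_le hn)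
  · rintro ⟨f, -, rfl⟩
    exact ⟨f, rfl⟩

open Polynomial in
theorem mem_adjoin_insert_iff_exists_sum_mul_pow {R S : Type*} [CommRing R] [CommRing S]
    [Nontrivial S] [Algebra R S] {s : Set S} {x : S} {p : (Algebra.adjoin R s)[X]}
    (hp : p.Monic) (hx : aeval x p = 0) {n : ℕ} (hn : p.natDegree ≤ n) {y : S} :
    y ∈ Algebra.adjoin R (insert x s) ↔
      ∃ c : Fin n → Algebra.adjoin R s, y = ∑ i, (c i : S) * x ^ (i : ℕ) := by
  rw [← Set.union_singleton, Algebra.adjoin_union_eq_adjoin_adjoin,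
    Subalgebra.mem_restrictScalars, ← Subalgebra.mem_toSubmodule,
    hp.toSubmodule_adjoin_eq_span_pow hx hn,
    Submodule.mem_span_range_iff_exists_fun]
  simp only [eq_comm, Subalgebra.smul_def, smul_eq_mul]

theorem AlgHom.apply_eq_self_of_mem_adjoin {R S : Type*} [CommSemiring R] [Semiring S]
    [Algebra R S] (f : S →ₐ[R] S) {s : Set S} (hs : ∀ y ∈ s, f y = y) {y : S}
    (hy : y ∈ Algebra.adjoin R s) : f y = y :=
  f.adjoin_le_equalizer (AlgHom.id R S) hs hy

theorem eq_zero_of_sum_mul_pow_eq_zero_of_distinct_conjugates {R S : Type*} [CommSemiring R]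
    [CommRing S] [IsDomain S] [Algebra R S] {s : Set S} {n : ℕ} (f : Fin n → S →ₐ[R] S)
    (hf : ∀ j, ∀ y ∈ s, f j y = y) {x : S} (hinj : Function.Injective fun j => f j x)
    (c : Fin n → Algebra.adjoin R s) (h : ∑ i, (c i : S) * x ^ (i : ℕ) = 0) : c = 0 := by
  have hconj : ∀ j, ∑ i, (c i : S) * f j x ^ (i : ℕ) = 0 := fun j => by
    simpa [map_sum, (f j).apply_eq_self_of_mem_adjoin (hf j) (c _).2] using congrArg (f j) h
  have := Matrix.eq_zero_of_forall_index_sum_mul_pow_eq_zero hinj hconj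
  funext i
  exact Subtype.ext (congrFun this i)

section DicksonInvariants

variable {K : Type*} [CommRing K]

theorem rename_swap_dickson_eq_self (y : MvPolynomial (Fin 2) K)
    (hy : y ∈ ({X 0 ^ 2 + X 0 * X 1 + X 1 ^ 2, X 0 * X 1 * (X 0 + X 1)} : Set _)) :
    rename (Equiv.swap 0 1) y = y := by
  rcases hy with rfl | rfl <;>
    simp only [map_add, map_mul, map_pow, rename_X, Equiv.swap_apply_left,
      Equiv.swap_apply_right] <;>
    ring

theorem aeval_transvection_dickson_eq_self [CharP K 2] (y : MvPolynomial (Fin 2) K)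
    (hy : y ∈ ({X 0 ^ 2 + X 0 * X 1 + X 1 ^ 2, X 0 * X 1 * (X 0 + X 1)} : Set _)) :
    aeval ![X 0 + X 1, X 1] y = y := by
  have two_eq_zero := CharTwo.two_eq_zero (R := MvPolynomial (Fin 2) K)
  rcases hy with rfl | rfl <;>
    simp only [map_add, map_mul, map_pow, aeval_X, Matrix.cons_val_zero, Matrix.cons_val_one]
  · linear_combination (X 0 * X 1 + X 1 ^ 2) * two_eq_zero
  · linear_combination (X 0 * X 1 ^ 2 + X 1 ^ 3) * two_eq_zero

theorem X_zero_pow_three_eq_dickson [CharP K 2] :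
    (X 0 : MvPolynomial (Fin 2) K) ^ 3 =
      (X 0 ^ 2 + X 0 * X 1 + X 1 ^ 2) * X 0 + X 0 * X 1 * (X 0 + X 1) := by
  linear_combination
    -(X 0 ^ 2 * X 1 + X 0 * X 1 ^ 2) * CharTwo.two_eq_zero (R := MvPolynomial (Fin 2) K)

theorem injective_orbit_X_zero [Nontrivial K] :
    Function.Injective ![(X 0 : MvPolynomial (Fin 2) K), X 1, X 0 + X 1] := by
  intro i j h
  fin_cases i <;> fin_cases j <;> simp [X_ne_zero, X_inj] at h ⊢

end DicksonInvariants

/-- In `F₂[w, t]`, with Dickson invariants `d₂ = w² + wt + t²` and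
`d₃ = wt(w + t)`, the subalgebra `F₂[w, d₂, d₃]` is a free module over its
subring `F₂[d₂, d₃]` with basis `{1, w, w²}`. -/
theorem adjoin_w_dickson_free_over_dickson
    (w t d₂ d₃ : MvPolynomial (Fin 2) (ZMod 2))
    (hw : w = X 0) (ht : t = X 1)
    (hd₂ : d₂ = w ^ 2 + w * t + t ^ 2) (hd₃ : d₃ = w * t * (w + t)) :
    (∀ p : MvPolynomial (Fin 2) (ZMod 2),
        p ∈ Algebra.adjoin (ZMod 2) ({w, d₂, d₃} : Set (MvPolynomial (Fin 2) (ZMod 2))) ↔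
        ∃ c : Fin 3 → ↥(Algebra.adjoin (ZMod 2) ({d₂, d₃} : Set (MvPolynomial (Fin 2) (ZMod 2)))),
          p = ∑ i : Fin 3, (c i : MvPolynomial (Fin 2) (ZMod 2)) * w ^ (i : ℕ)) ∧
    (∀ c : Fin 3 → ↥(Algebra.adjoin (ZMod 2) ({d₂, d₃} : Set (MvPolynomial (Fin 2) (ZMod 2)))),
        ∑ i : Fin 3, (c i : MvPolynomial (Fin 2) (ZMod 2)) * w ^ (i : ℕ) = 0 →
        ∀ i, c i = 0) := by
  subst hw ht hd₂ hd₃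
  set A := Algebra.adjoin (ZMod 2) ({X 0 ^ 2 + X 0 * X 1 + X 1 ^ 2, X 0 * X 1 * (X 0 + X 1)} :
    Set (MvPolynomial (Fin 2) (ZMod 2)))
  refine ⟨fun p => ?_, fun c hc => ?_⟩
  · let cubic : Polynomial A := .X ^ 3 - .C ⟨_, Algebra.subset_adjoin (.inl rfl)⟩ * .X
      - .C ⟨_, Algebra.subset_adjoin (.inr rfl)⟩
    refine mem_adjoin_insert_iff_exists_sum_mul_pow (p := cubic) ?_ ?_ ?_
    · unfold cubic; monicity!
    · simp [cubic, X_zero_pow_three_eq_dickson]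
    · unfold cubic; compute_degree!
  · let σ := rename (R := ZMod 2) (Equiv.swap (0 : Fin 2) 1)
    let τ := aeval (R := ZMod 2) ![X 0 + X 1, (X 1 : MvPolynomial (Fin 2) (ZMod 2))]
    refine congrFun
      (eq_zero_of_sum_mul_pow_eq_zero_of_distinct_conjugates ![.id _ _, σ, τ] ?_ ?_ c hc)
    · intro j
      fin_cases j
      · exact fun _ _ => rfl
      · exact rename_swap_dickson_eq_self
      · exact aeval_transvection_dickson_eq_self
    · convert injective_orbit_X_zero (K := ZMod 2) using 1
      funext j
      fin_cases j <;> simp [σ, τ]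
end

section
/- For n ≥ 4, every maximal elementary abelian 2-subgroup E of the alternating group A_n is conjugate in A_n to a subgroup of the following form: an internal direct product E_{i_1} × V_2^{i_2} × ... × V_r^{i_r} of subgroups supported on pairwise disjoint subsets of the n letters, where for j ≥ 2 each factor V_j is the image of the regular permutation representation of (Z/2)^j on a block of 2^j letters, V_j^{i_j} denotes a product of i_j such factors on disjoint blocks, and E_{i_1} is the subgroup of even permutations in a product V_1^{i_1} of i_1 disjoint transposition subgroups ⟨(a b)⟩ on disjoint pairs of letters; moreover the total number of letters covered, 2i_1 + 4i_2 + ... + 2^r i_r, equals n, n−1, n−2, or n−3. -/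
/-!
A group `E` of permutations in which every element squares to `1` is abelian, so it acts regularly
on each of its orbits: an element fixing a point fixes the whole orbit. Restricting `E` to its
nontrivial orbits therefore gives elementary abelian 2-groups `V_i`, each acting regularly on its
orbit, which thus has `|V_i| = 2^{j_i}` points. The group `E` lies in the internal direct product
of the `V_i`, whose even part is still elementary abelian, so maximality forces
`E = (∏ V_i) ∩ Aₙ`; no conjugation is needed. Finally, if `E` fixed four points `a, b, c, d`, then `(a b)(c d)` would be
an even involution centralizing `E` but not in `E`, again contradicting maximality; so at most
three points lie outside the orbits.
-/

open Equiv Equiv.Perm MulAction Finset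

namespace Subgroup

variable {G : Type*} [Group G]

theorem commute_of_forall_mul_self_eq_one {H : Subgroup G} (hH : ∀ g ∈ H, g * g = 1)
    {a b : G} (ha : a ∈ H) (hb : b ∈ H) : Commute a b := by
  have hinv : ∀ g ∈ H, g⁻¹ = g := fun g hg => inv_eq_of_mul_eq_one_right (hH g hg)
  calc a * b = (a * b)⁻¹ := (hinv _ (H.mul_mem ha hb)).symm
    _ = b * a := by rw [mul_inv_rev, hinv a ha, hinv b hb]

theorem mul_self_eq_one_of_mem_closure {s : Set G} (hcomm : ∀ x ∈ s, ∀ y ∈ s, Commute x y)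
    (hs : ∀ x ∈ s, x * x = 1) {g : G} (hg : g ∈ closure s) : g * g = 1 := by
  have : IsMulCommutative (closure s) :=
    isMulCommutative_closure fun x hx y hy => (hcomm x hx y hy).eq
  induction hg using closure_induction with
  | mem x hx => exact hs x hx
  | one => exact mul_one 1
  | mul x y hx hy ihx ihy =>
    rw [(show Commute y x from setLike_mul_comm hy hx).mul_mul_mul_comm, ihx, ihy, one_mul]
  | inv x _ ih => rw [← mul_inv_rev, ih, inv_one]

theorem mul_self_eq_one_of_mem_iSup {ι : Sort*} {S : ι → Subgroup G}
    (hcomm : ∀ i j, ∀ x ∈ S i, ∀ y ∈ S j, Commute x y) (hS : ∀ i, ∀ x ∈ S i, x * x = 1)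
    {g : G} (hg : g ∈ ⨆ i, S i) : g * g = 1 := by
  rw [iSup_eq_closure] at hg
  refine mul_self_eq_one_of_mem_closure ?_ ?_ hg <;> simp only [Set.mem_iUnion, SetLike.mem_coe]
  · rintro x ⟨i, hx⟩ y ⟨j, hy⟩
    exact hcomm i j x hx y hy
  · rintro x ⟨i, hx⟩
    exact hS i x hx

theorem mem_of_commute_of_maximal {A E : Subgroup G} (hE : E ≤ A) (h2 : ∀ g ∈ E, g * g = 1)
    (hmax : ∀ E' : Subgroup G, E' ≤ A → (∀ g ∈ E', g * g = 1) → E ≤ E' → E' = E)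
    {t : G} (htA : t ∈ A) (ht : t * t = 1) (hcomm : ∀ g ∈ E, Commute g t) : t ∈ E := by
  have hclosure : closure (insert t (E : Set G)) = E := by
    refine hmax _ ((closure_le A).mpr (Set.insert_subset htA hE)) (fun g hg => ?_)
      (fun x hx => subset_closure (Set.mem_insert_of_mem t hx))
    refine mul_self_eq_one_of_mem_closure ?_ ?_ hg <;> simp only [Set.forall_mem_insert]
    · exact ⟨⟨Commute.refl t, fun y hy => (hcomm y hy).symm⟩,
        fun x hx => ⟨hcomm x hx, fun y hy => commute_of_forall_mul_self_eq_one h2 hx hy⟩⟩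
    · exact ⟨ht, h2⟩
  exact hclosure ▸ subset_closure (Set.mem_insert t E)

end Subgroup

namespace Equiv.Perm

variable {α : Type*} {E : Subgroup (Perm α)}

section Restriction

variable [DecidableEq α]

def restrictHom (E : Subgroup (Perm α)) (s : Finset α)
    (hs : ∀ g ∈ E, ∀ x, g x ∈ s ↔ x ∈ s) : E →* Perm α :=
  ofSubtype.comp
    { toFun := fun g => (g : Perm α).subtypePerm (hs g g.2)
      map_one' := rfl
      map_mul' := fun _ _ => rfl }

variable {s t : Finset α} {hs : ∀ g ∈ E, ∀ x, g x ∈ s ↔ x ∈ s}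

theorem restrictHom_apply (g : E) (x : α) :
    restrictHom E s hs g x = if x ∈ s then (g : Perm α) x else x := by
  split_ifs with hx
  · exact ofSubtype_apply_of_mem _ hx
  · exact ofSubtype_apply_of_not_mem _ hx

theorem restrictHom_union (ht : ∀ g ∈ E, ∀ x, g x ∈ t ↔ x ∈ t) (hst : _root_.Disjoint s t)
    (g : E) :
    restrictHom E (s ∪ t) (fun g hg x => by simp only [mem_union, hs g hg, ht g hg]) g =
      restrictHom E s hs g * restrictHom E t ht g := by
  ext x
  simp only [restrictHom_apply, mul_apply, mem_union]
  by_cases hxs : x ∈ s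
  · simp [hxs, disjoint_left.mp hst hxs]
  · have hgxs : (g : Perm α) x ∉ s := mt (hs g g.2 x).mp hxs
    by_cases hxt : x ∈ t <;> simp [hxs, hxt, hgxs]

theorem restrictHom_eq_self {g : E} (hg : ∀ x ∉ s, (g : Perm α) x = x) :
    restrictHom E s hs g = g := by
  ext x
  rw [restrictHom_apply]
  split_ifs with hx
  · rfl
  · exact (hg x hx).symm

theorem mem_iSup_range_restrictHom {ι : Type*} [Fintype ι] (B : ι → Finset α)
    (hB : ∀ i, ∀ g ∈ E, ∀ x, g x ∈ B i ↔ x ∈ B i)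
    (hdisj : ∀ i j, i ≠ j → _root_.Disjoint (B i) (B j))
    {g : Perm α} (hg : g ∈ E) (hfix : ∀ x, (∀ i, x ∉ B i) → g x = x) :
    g ∈ ⨆ i, (restrictHom E (B i) (hB i)).range := by
  classical
  have hU : ∀ I : Finset ι, ∀ h ∈ E, ∀ x, h x ∈ I.biUnion B ↔ x ∈ I.biUnion B := by
    intro I h hh x
    simp only [mem_biUnion, hB _ h hh]
  suffices ∀ I : Finset ι, restrictHom E (I.biUnion B) (hU I) ⟨g, hg⟩ ∈
      ⨆ i, (restrictHom E (B i) (hB i)).range by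
    have hg_univ := this univ
    rwa [restrictHom_eq_self fun x hx =>
      hfix x fun i hi => hx (mem_biUnion.mpr ⟨i, mem_univ i, hi⟩)] at hg_univ
  intro I
  induction I using Finset.induction_on with
  | empty =>
    rw [show restrictHom E _ (hU ∅) ⟨g, hg⟩ = 1 by ext x; simp [restrictHom_apply]]
    exact one_mem _
  | insert i I hi ih =>
    have hdisjI : _root_.Disjoint (B i) (I.biUnion B) :=
      (disjoint_biUnion_right _ _ _).mpr fun j hj => hdisj i j (ne_of_mem_of_not_mem hj hi).symm
    rw [show restrictHom E _ (hU (insert i I)) ⟨g, hg⟩ =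
        restrictHom E (B i) (hB i) ⟨g, hg⟩ * restrictHom E _ (hU I) ⟨g, hg⟩ by
      rw [← restrictHom_union _ hdisjI]; simp only [biUnion_insert]]
    exact mul_mem (Subgroup.mem_iSup_of_mem i ⟨_, rfl⟩) ih

theorem commute_of_disjoint {s t : Finset α} (hst : _root_.Disjoint s t) {g h : Perm α}
    (hg : ∀ y ∉ s, g y = y) (hh : ∀ y ∉ t, h y = y) : Commute g h :=
  Disjoint.commute fun y =>
    if hy : y ∈ s then Or.inr (hh y (disjoint_left.mp hst hy)) else Or.inl (hg y hy)

end Restriction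

section Orbit

variable [Finite α] {x y : α}

noncomputable def orbitFinset (E : Subgroup (Perm α)) (x : α) : Finset α :=
  (Set.toFinite (orbit E x)).toFinset

theorem mem_orbitFinset : y ∈ orbitFinset E x ↔ ∃ g ∈ E, g x = y := by
  simp [orbitFinset, mem_orbit_iff, Subgroup.smul_def, Perm.smul_def]

theorem self_mem_orbitFinset : x ∈ orbitFinset E x :=
  mem_orbitFinset.mpr ⟨1, E.one_mem, rfl⟩

theorem apply_mem_orbitFinset_iff {g : Perm α} (hg : g ∈ E) :
    g y ∈ orbitFinset E x ↔ y ∈ orbitFinset E x := by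
  simp only [mem_orbitFinset]
  constructor
  · rintro ⟨h, hh, hhx⟩
    exact ⟨g⁻¹ * h, E.mul_mem (E.inv_mem hg) hh, by simp [hhx]⟩
  · rintro ⟨h, hh, rfl⟩
    exact ⟨g * h, E.mul_mem hg hh, rfl⟩

theorem orbitFinset_eq_of_mem (hy : y ∈ orbitFinset E x) : orbitFinset E y = orbitFinset E x := by
  obtain ⟨g, hg, rfl⟩ := mem_orbitFinset.mp hy
  ext z
  simp only [mem_orbitFinset]
  constructor
  · rintro ⟨h, hh, rfl⟩
    exact ⟨h * g, E.mul_mem hh hg, rfl⟩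
  · rintro ⟨h, hh, rfl⟩
    exact ⟨h * g⁻¹, E.mul_mem hh (E.inv_mem hg), by simp⟩

theorem disjoint_orbitFinset (h : orbitFinset E x ≠ orbitFinset E y) :
    _root_.Disjoint (orbitFinset E x) (orbitFinset E y) :=
  disjoint_left.mpr fun _ hzx hzy =>
    h ((orbitFinset_eq_of_mem hzx).symm.trans (orbitFinset_eq_of_mem hzy))

theorem one_lt_card_orbitFinset_iff : 1 < #(orbitFinset E x) ↔ ∃ g ∈ E, g x ≠ x := by
  rw [one_lt_card_iff]
  simp only [mem_orbitFinset]
  constructor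
  · rintro ⟨_, _, ⟨g, hg, rfl⟩, ⟨h, hh, rfl⟩, hne⟩
    by_contra! hfix
    exact hne (by rw [hfix g hg, hfix h hh])
  · rintro ⟨g, hg, hgx⟩
    exact ⟨g x, x, ⟨g, hg, rfl⟩, ⟨1, E.one_mem, rfl⟩, hgx⟩

theorem apply_eq_self_of_mem_orbitFinset (hcomm : ∀ g ∈ E, ∀ h ∈ E, Commute g h) {g : Perm α}
    (hg : g ∈ E) (hgx : g x = x) (hy : y ∈ orbitFinset E x) : g y = y := by
  obtain ⟨h, hh, rfl⟩ := mem_orbitFinset.mp hy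
  rw [← mul_apply, (hcomm g hg h hh).eq, mul_apply, hgx]

variable [DecidableEq α]

noncomputable def orbitRestriction (E : Subgroup (Perm α)) (x : α) : Subgroup (Perm α) :=
  (restrictHom E (orbitFinset E x) (fun _ hg _ => apply_mem_orbitFinset_iff hg)).range

theorem apply_eq_self_of_mem_orbitRestriction {g : Perm α} (hg : g ∈ orbitRestriction E x)
    (hy : y ∉ orbitFinset E x) : g y = y := by
  obtain ⟨h, rfl⟩ := hg
  simp [restrictHom_apply, hy]

theorem mul_self_eq_one_of_mem_orbitRestriction (h2 : ∀ g ∈ E, g * g = 1) {g : Perm α}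
    (hg : g ∈ orbitRestriction E x) : g * g = 1 := by
  obtain ⟨h, rfl⟩ := hg
  rw [← map_mul, show h * h = 1 from Subtype.ext (h2 h h.2), map_one]

theorem exists_mem_orbitRestriction_apply_eq {z : α} (hy : y ∈ orbitFinset E x)
    (hz : z ∈ orbitFinset E x) : ∃ g ∈ orbitRestriction E x, g y = z := by
  rw [← orbitFinset_eq_of_mem hy] at hz
  obtain ⟨g, hg, rfl⟩ := mem_orbitFinset.mp hz
  exact ⟨_, ⟨⟨g, hg⟩, rfl⟩, by simp [restrictHom_apply, hy]⟩

theorem eq_one_of_mem_orbitRestriction (hcomm : ∀ g ∈ E, ∀ h ∈ E, Commute g h) {g : Perm α}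
    (hg : g ∈ orbitRestriction E x) (hy : y ∈ orbitFinset E x) (hgy : g y = y) : g = 1 := by
  obtain ⟨h, rfl⟩ := hg
  have hhy : (h : Perm α) y = y := by simpa [restrictHom_apply, hy] using hgy
  ext z
  by_cases hz : z ∈ orbitFinset E x
  · rw [← orbitFinset_eq_of_mem hy] at hz
    simp [restrictHom_apply, apply_eq_self_of_mem_orbitFinset hcomm h.2 hhy hz]
  · simp [restrictHom_apply, hz]

theorem card_orbitRestriction (hcomm : ∀ g ∈ E, ∀ h ∈ E, Commute g h) :
    Nat.card (orbitRestriction E x) = #(orbitFinset E x) := by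
  have hstab : stabilizer (orbitRestriction E x) x = ⊥ :=
    (Subgroup.eq_bot_iff_forall _).mpr fun g hg =>
      Subtype.ext (eq_one_of_mem_orbitRestriction hcomm g.2 self_mem_orbitFinset hg)
  have horbit : orbit (orbitRestriction E x) x = orbitFinset E x := by
    ext y
    simp only [mem_orbit_iff, Subgroup.smul_def, Perm.smul_def, mem_coe]
    constructor
    · rintro ⟨⟨_, ⟨h, rfl⟩⟩, rfl⟩
      simpa [restrictHom_apply, self_mem_orbitFinset] using
        mem_orbitFinset.mpr ⟨(h : Perm α), h.2, rfl⟩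
    · intro hy
      obtain ⟨g, hg, rfl⟩ := exists_mem_orbitRestriction_apply_eq self_mem_orbitFinset hy
      exact ⟨⟨g, hg⟩, rfl⟩
  rw [← Subgroup.index_bot, ← hstab, index_stabilizer, horbit, Set.ncard_coe_finset]

theorem isPGroup_orbitRestriction (h2 : ∀ g ∈ E, g * g = 1) :
    IsPGroup 2 (orbitRestriction E x) := fun g =>
  ⟨1, Subtype.ext (by simpa [pow_two] using mul_self_eq_one_of_mem_orbitRestriction h2 g.2)⟩

end Orbit

section Alternating

variable [Fintype α] [DecidableEq α]

theorem card_le_three_of_forall_apply_eq_self (hE : E ≤ alternatingGroup α)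
    (h2 : ∀ g ∈ E, g * g = 1)
    (hmax : ∀ E' : Subgroup (Perm α),
      E' ≤ alternatingGroup α → (∀ g ∈ E', g * g = 1) → E ≤ E' → E' = E)
    {s : Finset α} (hs : ∀ y ∈ s, ∀ g ∈ E, g y = y) : #s ≤ 3 := by
  by_contra! h4
  obtain ⟨t, hts, ht4⟩ := exists_subset_card_eq (show 4 ≤ #s by omega)
  obtain ⟨a, b, c, d, hab, hac, had, hbc, hbd, hcd, rfl⟩ := card_eq_four.mp ht4
  -- `(a b)(c d)` is an even involution centralizing `E`, so maximality puts it in `E`.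
  set τ := swap a b * swap c d with hτ
  have hτ2 : τ * τ = 1 := by
    rw [hτ, (disjoint_swap_swap (by simp [*])).symm.commute.mul_mul_mul_comm, swap_mul_self,
      swap_mul_self, one_mul]
  have hτE : τ ∈ E := by
    refine Subgroup.mem_of_commute_of_maximal hE h2 hmax
      (mul_mem_alternatingGroup_of_isSwap ⟨a, b, hab, rfl⟩ ⟨c, d, hcd, rfl⟩) hτ2 fun g hg => ?_
    refine commute_of_disjoint (disjoint_compl_left (a := {a, b, c, d})) (fun y hy => ?_)
      (fun y hy => ?_)
    · exact hs y (hts (notMem_compl.mp hy)) g hg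
    · simp only [mem_insert, mem_singleton, not_or] at hy
      simp [hτ, swap_apply_of_ne_of_ne, hy]
  have hτa : τ a = b := by simp [hτ, swap_apply_of_ne_of_ne, hac, had]
  exact hab (hτa ▸ hs a (hts (by simp)) τ hτE).symm

theorem exists_nontrivial_orbit_representatives (E : Subgroup (Perm α)) :
    ∃ (k : ℕ) (x : Fin k → α), (∀ a, ∃ g ∈ E, g (x a) ≠ x a) ∧
      (∀ a b, a ≠ b → _root_.Disjoint (orbitFinset E (x a)) (orbitFinset E (x b))) ∧
      ∀ y, (∀ a, y ∉ orbitFinset E (x a)) → ∀ g ∈ E, g y = y := by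
  classical
  set O := ({y | ∃ g ∈ E, g y ≠ y} : Finset α).image (orbitFinset E)
  have hrep (a : Fin #O) : ∃ y, (∃ g ∈ E, g y ≠ y) ∧ orbitFinset E y = O.equivFin.symm a := by
    obtain ⟨y, hy, hyx⟩ := mem_image.mp (O.equivFin.symm a).2
    exact ⟨y, (mem_filter.mp hy).2, hyx⟩
  choose x hmoved hx using hrep
  refine ⟨#O, x, hmoved, fun a b hab => disjoint_orbitFinset ?_, fun y hy g hg => ?_⟩
  · rw [hx, hx]
    exact fun h => hab (O.equivFin.symm.injective (Subtype.ext h))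
  · by_contra hgy
    have hyO : orbitFinset E y ∈ O := mem_image_of_mem _ (by simpa using ⟨g, hg, hgy⟩)
    refine hy (O.equivFin ⟨_, hyO⟩) ?_
    rw [hx, Equiv.symm_apply_apply]
    exact self_mem_orbitFinset

variable {ι : Type*} [Fintype ι] {x : ι → α}

theorem iSup_orbitRestriction_inf_alternatingGroup (hE : E ≤ alternatingGroup α)
    (h2 : ∀ g ∈ E, g * g = 1)
    (hmax : ∀ E' : Subgroup (Perm α),
      E' ≤ alternatingGroup α → (∀ g ∈ E', g * g = 1) → E ≤ E' → E' = E)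
    (hdisj : ∀ a b, a ≠ b → _root_.Disjoint (orbitFinset E (x a)) (orbitFinset E (x b)))
    (hfixed : ∀ y, (∀ a, y ∉ orbitFinset E (x a)) → ∀ g ∈ E, g y = y) :
    (⨆ a, orbitRestriction E (x a)) ⊓ alternatingGroup α = E := by
  have hcomm : ∀ a b, ∀ g ∈ orbitRestriction E (x a), ∀ h ∈ orbitRestriction E (x b),
      Commute g h := fun a b g hg h hh => by
    obtain rfl | hab := eq_or_ne a b
    · exact Subgroup.commute_of_forall_mul_self_eq_one
        (fun _ => mul_self_eq_one_of_mem_orbitRestriction h2) hg hh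
    · exact commute_of_disjoint (hdisj a b hab)
        (fun _ => apply_eq_self_of_mem_orbitRestriction hg)
        (fun _ => apply_eq_self_of_mem_orbitRestriction hh)
  refine hmax _ inf_le_right (fun g hg => ?_) (le_inf (fun g hg => ?_) hE)
  · exact Subgroup.mul_self_eq_one_of_mem_iSup hcomm
      (fun _ _ => mul_self_eq_one_of_mem_orbitRestriction h2) hg.1
  · exact mem_iSup_range_restrictHom _ (fun _ _ hg _ => apply_mem_orbitFinset_iff hg) hdisj hg
      fun y hy => hfixed y hy g hg

theorem card_le_sum_card_orbitFinset_add_three (hE : E ≤ alternatingGroup α)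
    (h2 : ∀ g ∈ E, g * g = 1)
    (hmax : ∀ E' : Subgroup (Perm α),
      E' ≤ alternatingGroup α → (∀ g ∈ E', g * g = 1) → E ≤ E' → E' = E)
    (hdisj : ∀ a b, a ≠ b → _root_.Disjoint (orbitFinset E (x a)) (orbitFinset E (x b)))
    (hfixed : ∀ y, (∀ a, y ∉ orbitFinset E (x a)) → ∀ g ∈ E, g y = y) :
    Fintype.card α ≤ ∑ a, #(orbitFinset E (x a)) + 3 := by
  classical
  set U := univ.biUnion fun a => orbitFinset E (x a)
  have hUc : #Uᶜ ≤ 3 := card_le_three_of_forall_apply_eq_self hE h2 hmax fun y hy =>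
    hfixed y fun a hya => mem_compl.mp hy (mem_biUnion.mpr ⟨a, mem_univ a, hya⟩)
  have hU : #U = ∑ a, #(orbitFinset E (x a)) :=
    card_biUnion fun a _ b _ hab => hdisj a b hab
  have := card_add_card_compl U
  omega

end Alternating

end Equiv.Perm

theorem maximal_elementary_abelian_of_alternating_group_general
    (n : ℕ) (E : Subgroup (Equiv.Perm (Fin n)))
    (hE : E ≤ alternatingGroup (Fin n))
    (h2 : ∀ g ∈ E, g * g = 1)
    (hmax : ∀ E' : Subgroup (Equiv.Perm (Fin n)),
      E' ≤ alternatingGroup (Fin n) → (∀ g ∈ E', g * g = 1) → E ≤ E' → E' = E) :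
    ∃ σ ∈ alternatingGroup (Fin n), ∃ (k : ℕ) (J : Fin k → ℕ)
      (B : Fin k → Finset (Fin n)) (V : Fin k → Subgroup (Equiv.Perm (Fin n))),
      (∀ a, 1 ≤ J a) ∧
      (∀ a, (B a).card = 2 ^ J a) ∧
      (∀ a b, a ≠ b → Disjoint (B a) (B b)) ∧
      (∀ a, ∀ g ∈ V a, ∀ x : Fin n, x ∉ B a → g x = x) ∧
      (∀ a, ∀ g ∈ V a, g * g = 1) ∧
      (∀ a, Nat.card ↥(V a) = 2 ^ J a) ∧
      (∀ a, ∀ g ∈ V a, g ≠ 1 → ∀ x ∈ B a, g x ≠ x) ∧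
      (∀ a, ∀ x ∈ B a, ∀ y ∈ B a, ∃ g ∈ V a, g x = y) ∧
      (n ≤ (∑ a, (B a).card) + 3) ∧
      Subgroup.map (MulAut.conj σ).toMonoidHom E =
        (⨆ a, V a) ⊓ alternatingGroup (Fin n) := by
  obtain ⟨k, x, hmoved, hdisj, hfixed⟩ := exists_nontrivial_orbit_representatives E
  have hcomm : ∀ g ∈ E, ∀ h ∈ E, Commute g h := fun _ hg _ hh =>
    Subgroup.commute_of_forall_mul_self_eq_one h2 hg hh
  choose J hJ using fun a => (isPGroup_orbitRestriction h2 (x := x a)).exists_card_eq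
  have hcard (a : Fin k) : #(orbitFinset E (x a)) = 2 ^ J a :=
    (card_orbitRestriction hcomm).symm.trans (hJ a)
  refine ⟨1, one_mem _, k, J, fun a => orbitFinset E (x a), fun a => orbitRestriction E (x a),
    fun a => ?_, hcard, hdisj, fun a _ hg _ => apply_eq_self_of_mem_orbitRestriction hg,
    fun a _ => mul_self_eq_one_of_mem_orbitRestriction h2, hJ,
    fun a g hg hg1 y hy hgy => hg1 (eq_one_of_mem_orbitRestriction hcomm hg hy hgy),
    fun a _ hy _ hz => exists_mem_orbitRestriction_apply_eq hy hz, ?_, ?_⟩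
  · exact Nat.one_le_iff_ne_zero.mpr (Nat.one_lt_two_pow_iff.mp
      (hcard a ▸ one_lt_card_orbitFinset_iff.mpr (hmoved a)))
  · simpa using card_le_sum_card_orbitFinset_add_three hE h2 hmax hdisj hfixed
  · rw [map_one, iSup_orbitRestriction_inf_alternatingGroup hE h2 hmax hdisj hfixed]
    exact Subgroup.map_id E

/-- Classification of maximal elementary abelian 2-subgroups of `Aₙ` (`n ≥ 4`):
every such subgroup is conjugate in `Aₙ` to the subgroup of even permutations
in an internal direct product of subgroups `V a` supported on pairwise disjoint
blocks `B a` of sizes `2^(J a)`, where each `V a` is the image of the regular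
permutation representation of `(Z/2)^(J a)` on its block (for `J a = 1` these
are disjoint transpositions, whose product contributes the factor `E_{i₁}`
of even permutations), and the number of letters covered is `n`, `n−1`, `n−2`
or `n−3`. -/
theorem maximal_elementary_abelian_of_alternating_group
    (n : ℕ) (hn : 4 ≤ n) (E : Subgroup (Equiv.Perm (Fin n)))
    (hE : E ≤ alternatingGroup (Fin n))
    (h2 : ∀ g ∈ E, g * g = 1)
    (hmax : ∀ E' : Subgroup (Equiv.Perm (Fin n)),
      E' ≤ alternatingGroup (Fin n) → (∀ g ∈ E', g * g = 1) → E ≤ E' → E' = E) :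
    ∃ σ ∈ alternatingGroup (Fin n), ∃ (k : ℕ) (J : Fin k → ℕ)
      (B : Fin k → Finset (Fin n)) (V : Fin k → Subgroup (Equiv.Perm (Fin n))),
      (∀ a, 1 ≤ J a) ∧
      (∀ a, (B a).card = 2 ^ J a) ∧
      (∀ a b, a ≠ b → Disjoint (B a) (B b)) ∧
      (∀ a, ∀ g ∈ V a, ∀ x : Fin n, x ∉ B a → g x = x) ∧
      (∀ a, ∀ g ∈ V a, g * g = 1) ∧
      (∀ a, Nat.card ↥(V a) = 2 ^ J a) ∧
      (∀ a, ∀ g ∈ V a, g ≠ 1 → ∀ x ∈ B a, g x ≠ x) ∧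
      (∀ a, ∀ x ∈ B a, ∀ y ∈ B a, ∃ g ∈ V a, g x = y) ∧
      (n ≤ (∑ a, (B a).card) + 3) ∧
      Subgroup.map (MulAut.conj σ).toMonoidHom E =
        (⨆ a, V a) ⊓ alternatingGroup (Fin n) :=
  maximal_elementary_abelian_of_alternating_group_general n E hE h2 hmax
end
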